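/- arXiv:math/0411229 — 6 statements merged into one kernel-verified Lean document; each statement's English description precedes it below -/
import Mathlib

section
/- Let i and a be positive integers with a ≥ 2, and set b = (a_(i))^{-1}_{-1}. Then ((a-1)_(i))^{-1}_{-1} equals b or b-1. -/
/-- `IsMacExp n i j f` says that `n = C(f i, i) + C(f (i-1), i-1) + ... + C(f j, j)`
is the `i`-binomial (Macaulay) expansion of `n`, i.e. `f i > f (i-1) > ... > f j ≥ j ≥ 1`. -/
def IsMacExp (n i j : ℕ) (f : ℕ → ℕ) : Prop :=
  1 ≤ j ∧ j ≤ i ∧ j ≤ f j ∧ (∀ k, j ≤ k → k < i → f k < f (k + 1)) ∧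
    n = ∑ k ∈ Finset.Icc j i, (f k).choose k

/-- The upper shift `(n_(i))^{+1}_{+1}` of an expansion. -/
def macUp (i j : ℕ) (f : ℕ → ℕ) : ℕ := ∑ k ∈ Finset.Icc j i, (f k + 1).choose (k + 1)

/-- The lower shift `(n_(i))^{-1}_{-1}` of an expansion. -/
def macDown (i j : ℕ) (f : ℕ → ℕ) : ℕ := ∑ k ∈ Finset.Icc j i, (f k - 1).choose (k - 1)

lemma icc_split (j i : ℕ) (h : j ≤ i) : Finset.Icc j i = insert j (Finset.Icc (j+1) i) := by
  ext x; simp only [Finset.mem_Icc, Finset.mem_insert]; omega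

lemma sum_icc_bot (g : ℕ → ℕ) (j i : ℕ) (h : j ≤ i) :
    ∑ k ∈ Finset.Icc j i, g k = g j + ∑ k ∈ Finset.Icc (j+1) i, g k := by
  rw [icc_split j i h, Finset.sum_insert (by simp)]

lemma sum_icc_split (g : ℕ → ℕ) (j i : ℕ) (h2 : j ≤ i) :
    ∑ k ∈ Finset.Icc 1 i, g k = ∑ k ∈ Finset.Icc 1 j, g k + ∑ k ∈ Finset.Icc (j+1) i, g k := by
  rw [← Finset.sum_union]
  · congr 1; ext x; simp only [Finset.mem_Icc, Finset.mem_union]; omega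
  · rw [Finset.disjoint_left]; intro x hx hx'
    simp only [Finset.mem_Icc] at hx hx'; omega

lemma hockey (r : ℕ) : ∀ t, ∑ m ∈ Finset.range (t+1), (r + m).choose m = (r + t + 1).choose t := by
  intro t
  induction t with
  | zero => simp
  | succ t IH =>
    rw [Finset.sum_range_succ, IH]
    exact (Nat.choose_succ_succ _ _).symm

lemma mac_f_ge (i j : ℕ) (f : ℕ → ℕ) (hjf : j ≤ f j)
    (hmono : ∀ k, j ≤ k → k < i → f k < f (k+1)) :
    ∀ k, j ≤ k → k ≤ i → k ≤ f k := by
  intro k hk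
  induction k, hk using Nat.le_induction with
  | base => intro _; exact hjf
  | succ k hk IH =>
    intro hki
    have h1 : k < i := by omega
    have := hmono k hk h1
    have := IH (by omega)
    omega

lemma mac_sum_lt (f : ℕ → ℕ) (j : ℕ) (hj1 : 1 ≤ j) (hjf : j ≤ f j) :
    ∀ i, j ≤ i → (∀ k, j ≤ k → k < i → f k < f (k+1)) →
      ∑ k ∈ Finset.Icc j i, (f k).choose k < (f i + 1).choose i := by
  intro i hji
  induction i, hji using Nat.le_induction with
  | base =>
    intro _
    rw [Finset.Icc_self, Finset.sum_singleton]
    have h1 : j - 1 + 1 = j := by omega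
    have h2 := Nat.choose_succ_succ (f j) (j - 1)
    simp only [Nat.succ_eq_add_one] at h2
    rw [h1] at h2
    have h3 : 0 < (f j).choose (j-1) := Nat.choose_pos (by omega)
    omega
  | succ i hji IH =>
    intro hmono
    rw [Finset.sum_Icc_succ_top (by omega)]
    have h1 := IH (fun k hk hki => hmono k hk (by omega))
    have h2 : f i + 1 ≤ f (i+1) := hmono i hji (by omega)
    have h3 : (f i + 1).choose i ≤ (f (i+1)).choose i := Nat.choose_le_choose _ h2
    have h4 := Nat.choose_succ_succ (f (i+1)) i
    simp only [Nat.succ_eq_add_one] at h4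
    omega

lemma mac_le_sum (f : ℕ → ℕ) (j i : ℕ) (hji : j ≤ i) :
    (f i).choose i ≤ ∑ k ∈ Finset.Icc j i, (f k).choose k :=
  Finset.single_le_sum (f := fun k => (f k).choose k) (fun k _ => Nat.zero_le _) (Finset.mem_Icc.mpr ⟨hji, le_refl i⟩)

lemma mac_unique : ∀ i n j f j' f', IsMacExp n i j f → IsMacExp n i j' f' →
    j = j' ∧ ∀ k, j ≤ k → k ≤ i → f k = f' k := by
  intro i
  induction i with
  | zero =>
    intro n j f j' f' h _
    obtain ⟨hj1, hji, -⟩ := h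
    omega
  | succ i IH =>
    intro n j f j' f' h h'
    obtain ⟨hj1, hji, hjf, hmono, hsum⟩ := h
    obtain ⟨hj1', hji', hjf', hmono', hsum'⟩ := h'
    have htop : f (i+1) = f' (i+1) := by
      have ha1 : (f (i+1)).choose (i+1) ≤ n := hsum ▸ mac_le_sum f j (i+1) hji
      have ha2 : (f' (i+1)).choose (i+1) ≤ n := hsum' ▸ mac_le_sum f' j' (i+1) hji'
      have hb1 : n < (f (i+1) + 1).choose (i+1) := hsum ▸ mac_sum_lt f j hj1 hjf (i+1) hji hmono
      have hb2 : n < (f' (i+1) + 1).choose (i+1) := hsum' ▸ mac_sum_lt f' j' hj1' hjf' (i+1) hji' hmono'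
      by_contra hne
      rcases Nat.lt_or_ge (f (i+1)) (f' (i+1)) with hlt | hge
      · have : (f (i+1) + 1).choose (i+1) ≤ (f' (i+1)).choose (i+1) :=
          Nat.choose_le_choose _ (by omega)
        omega
      · have hlt : f' (i+1) < f (i+1) := by omega
        have : (f' (i+1) + 1).choose (i+1) ≤ (f (i+1)).choose (i+1) :=
          Nat.choose_le_choose _ (by omega)
        omega
    by_cases hcase : j = i + 1
    · subst hcase
      by_cases hcase' : j' = i + 1
      · subst hcase'
        refine ⟨rfl, fun k hk hki => ?_⟩
        have : k = i + 1 := by omega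
        subst this; exact htop
      · exfalso
        have hj'i : j' ≤ i := by omega
        rw [Finset.Icc_self, Finset.sum_singleton] at hsum
        rw [Finset.sum_Icc_succ_top (by omega)] at hsum'
        have : (f' j').choose j' ≤ ∑ k ∈ Finset.Icc j' i, (f' k).choose k :=
          Finset.single_le_sum (f := fun k => (f' k).choose k) (fun k _ => Nat.zero_le _) (Finset.mem_Icc.mpr ⟨le_refl _, hj'i⟩)
        have hpos : 0 < (f' j').choose j' := Nat.choose_pos hjf'
        rw [htop] at hsum
        omega
    · by_cases hcase' : j' = i + 1
      · exfalso
        subst hcase'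
        have hji2 : j ≤ i := by omega
        rw [Finset.Icc_self, Finset.sum_singleton] at hsum'
        rw [Finset.sum_Icc_succ_top (by omega)] at hsum
        have : (f j).choose j ≤ ∑ k ∈ Finset.Icc j i, (f k).choose k :=
          Finset.single_le_sum (f := fun k => (f k).choose k) (fun k _ => Nat.zero_le _) (Finset.mem_Icc.mpr ⟨le_refl _, hji2⟩)
        have hpos : 0 < (f j).choose j := Nat.choose_pos hjf
        rw [← htop] at hsum'
        omega
      · have hji2 : j ≤ i := by omega
        have hji2' : j' ≤ i := by omega
        rw [Finset.sum_Icc_succ_top (by omega)] at hsum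
        rw [Finset.sum_Icc_succ_top (by omega)] at hsum'
        have hm : ∑ k ∈ Finset.Icc j i, (f k).choose k = ∑ k ∈ Finset.Icc j' i, (f' k).choose k := by
          rw [htop] at hsum; omega
        have H1 : IsMacExp (∑ k ∈ Finset.Icc j i, (f k).choose k) i j f :=
          ⟨hj1, hji2, hjf, fun k hk hki => hmono k hk (by omega), rfl⟩
        have H2 : IsMacExp (∑ k ∈ Finset.Icc j i, (f k).choose k) i j' f' :=
          ⟨hj1', hji2', hjf', fun k hk hki => hmono' k hk (by omega), hm⟩
        obtain ⟨hjj, hff⟩ := IH _ j f j' f' H1 H2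
        refine ⟨hjj, fun k hk hki => ?_⟩
        by_cases hk2 : k = i + 1
        · subst hk2; exact htop
        · exact hff k hk (by omega)

/-- If `b = (a_(i))^{-1}_{-1}`, then `((a-1)_(i))^{-1}_{-1}` equals `b` or `b - 1`. -/
theorem stmt_2 (i a : ℕ) (hi : 1 ≤ i) (ha : 2 ≤ a)
    (j f j' f' : _) (h1 : IsMacExp a i j f) (h2 : IsMacExp (a - 1) i j' f') :
    (macDown i j' f' : ℤ) = (macDown i j f : ℤ) ∨
      (macDown i j' f' : ℤ) = (macDown i j f : ℤ) - 1 := by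
  obtain ⟨hj1, hji, hjf, hmono, hsum⟩ := h1
  rcases Nat.lt_or_ge j (f j) with hfj | hfj
  · -- Case B : f j > j, the lower shift is unchanged
    left
    set g : ℕ → ℕ := fun k => if j < k then f k else f j + k - (j+1) with hg
    have hgval : ∀ k, k ≤ j → g k = f j + k - (j+1) := by
      intro k hk; simp only [hg]; rw [if_neg (by omega)]
    have hgval2 : ∀ k, j < k → g k = f k := by
      intro k hk; simp only [hg]; rw [if_pos hk]
    -- key sum identities via hockey stick
    have hock1 : ∑ m ∈ Finset.range (j+1), (f j - (j+1) + m).choose m = (f j).choose j := by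
      have := hockey (f j - (j+1)) j
      rwa [show f j - (j+1) + j + 1 = f j from by omega] at this
    have key1 : ∑ k ∈ Finset.Icc 1 j, (g k).choose k = (f j).choose j - 1 := by
      rw [← Finset.Ico_add_one_right_eq_Icc, Finset.sum_Ico_eq_sum_range]
      rw [Finset.sum_range_succ' (fun m => (f j - (j+1) + m).choose m) j] at hock1
      simp only [Nat.choose_zero_right] at hock1
      have : ∑ m ∈ Finset.range (j + 1 - 1), (g (1 + m)).choose (1 + m)
          = ∑ m ∈ Finset.range j, (f j - (j+1) + (m+1)).choose (m+1) := by
        rw [show j + 1 - 1 = j from by omega]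
        refine Finset.sum_congr rfl (fun m hm => ?_)
        simp only [Finset.mem_range] at hm
        rw [hgval (1+m) (by omega), show f j + (1+m) - (j+1) = f j - (j+1) + (m+1) from by omega,
          show 1 + m = m + 1 from by omega]
      rw [this]
      omega
    have key2 : ∑ k ∈ Finset.Icc 1 j, (g k - 1).choose (k - 1) = (f j - 1).choose (j - 1) := by
      rw [← Finset.Ico_add_one_right_eq_Icc, Finset.sum_Ico_eq_sum_range]
      have hock2 : ∑ m ∈ Finset.range ((j-1)+1), (f j - (j+1) + m).choose m
          = (f j - 1).choose (j - 1) := by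
        have := hockey (f j - (j+1)) (j-1)
        rwa [show f j - (j+1) + (j-1) + 1 = f j - 1 from by omega] at this
      rw [show (j-1)+1 = j from by omega] at hock2
      rw [show j + 1 - 1 = j from by omega]
      rw [← hock2]
      refine Finset.sum_congr rfl (fun m hm => ?_)
      simp only [Finset.mem_range] at hm
      rw [hgval (1+m) (by omega), show f j + (1+m) - (j+1) - 1 = f j - (j+1) + m from by omega,
        show 1 + m - 1 = m from by omega]
    -- the expansion of a - 1
    have HB : IsMacExp (a-1) i 1 g := by
      refine ⟨le_refl 1, hi, ?_, ?_, ?_⟩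
      · rw [hgval 1 hj1]; omega
      · intro k hk1 hki
        rcases Nat.lt_trichotomy k j with h | h | h
        · rw [hgval k (by omega), hgval (k+1) (by omega)]; omega
        · subst h
          rw [hgval k le_rfl, hgval2 (k+1) (by omega)]
          have := hmono k le_rfl hki
          omega
        · rw [hgval2 k h, hgval2 (k+1) (by omega)]
          exact hmono k (by omega) hki
      · rw [sum_icc_split _ j i hji, key1,
          Finset.sum_congr rfl (fun k hk => by
            rw [hgval2 k (Finset.mem_Icc.mp hk).1])]
        rw [sum_icc_bot _ j i hji] at hsum
        have : 0 < (f j).choose j := Nat.choose_pos (by omega)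
        omega
    obtain ⟨hjj, hff⟩ := mac_unique i (a-1) j' f' 1 g h2 HB
    have e1 : macDown i j' f' = macDown i 1 g := by
      subst hjj
      exact Finset.sum_congr rfl (fun k hk => by
        obtain ⟨hk1, hk2⟩ := Finset.mem_Icc.mp hk
        rw [hff k hk1 hk2])
    have e2 : macDown i 1 g = macDown i j f := by
      unfold macDown
      rw [sum_icc_split _ j i hji, key2,
        Finset.sum_congr rfl (fun k hk => by
          rw [hgval2 k (Finset.mem_Icc.mp hk).1]),
        sum_icc_bot (fun k => (f k - 1).choose (k-1)) j i hji]
    rw [e1, e2]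
  · -- Case A : f j = j, the lower shift drops by one
    right
    have hfj' : f j = j := by omega
    have hji2 : j < i := by
      rcases Nat.lt_or_ge j i with h | h
      · exact h
      · exfalso
        have : j = i := by omega
        subst this
        rw [Finset.Icc_self, Finset.sum_singleton, hfj', Nat.choose_self] at hsum
        omega
    have HA : IsMacExp (a-1) i (j+1) f := by
      refine ⟨by omega, by omega, ?_, fun k hk hki => hmono k (by omega) hki, ?_⟩
      · have := hmono j le_rfl hji2; omega
      · rw [sum_icc_bot _ j i hji, hfj', Nat.choose_self] at hsum
        omega
    obtain ⟨hjj, hff⟩ := mac_unique i (a-1) j' f' (j+1) f h2 HA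
    have e1 : macDown i j' f' = macDown i (j+1) f := by
      subst hjj
      exact Finset.sum_congr rfl (fun k hk => by
        obtain ⟨hk1, hk2⟩ := Finset.mem_Icc.mp hk
        rw [hff k hk1 hk2])
    have e2 : macDown i j f = 1 + macDown i (j+1) f := by
      unfold macDown
      rw [sum_icc_bot (fun k => (f k - 1).choose (k-1)) j i hji]
      rw [hfj', Nat.choose_self]
    rw [e1]
    have : (macDown i j f : ℤ) = 1 + (macDown i (j+1) f : ℤ) := by rw [e2]; push_cast; ring
    omega
end

section
/- Let a, b be positive integers with b > 1. Then the smallest integer c such that a ≤ (c_(b-1))^{+1}_{+1} is c = (a_(b))^{-1}_{-1}. -/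
namespace MacAux

lemma hs1 (N t : ℕ) : ∑ m ∈ Finset.Icc 1 t, (N + m).choose m = (N + t + 1).choose t - 1 := by
  induction t with
  | zero => simp
  | succ t ih =>
    rw [Finset.sum_Icc_succ_top (by omega), ih, show N + (t + 1) = N + t + 1 from rfl]
    have h1 : 1 ≤ (N + t + 1).choose t := Nat.choose_pos (by omega)
    have h2 : (N + t + 1 + 1).choose (t + 1)
        = (N + t + 1).choose t + (N + t + 1).choose (t + 1) := Nat.choose_succ_succ _ _
    omega

lemma sum_shift (j i : ℕ) (hj : 1 ≤ j) (hi : 1 ≤ i) (h : ℕ → ℕ) :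
    ∑ k ∈ Finset.Icc j i, h k = ∑ m ∈ Finset.Icc (j - 1) (i - 1), h (m + 1) := by
  have heq : Finset.Icc j i = (Finset.Icc (j - 1) (i - 1)).map (addRightEmbedding 1) := by
    rw [Finset.map_add_right_Icc]
    congr 1 <;> omega
  rw [heq, Finset.sum_map]
  exact Finset.sum_congr rfl (fun m _ => by simp [addRightEmbedding])

lemma f_lb {i j : ℕ} {f : ℕ → ℕ} (hfj : j ≤ f j)
    (hinc : ∀ k, j ≤ k → k < i → f k < f (k + 1)) :
    ∀ k, j ≤ k → k ≤ i → k ≤ f k := by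
  intro k hk hki
  induction k, hk using Nat.le_induction with
  | base => exact hfj
  | succ k hk ih => have := hinc k hk (by omega); have := ih (by omega); omega

lemma f_ub {i j : ℕ} {f : ℕ → ℕ}
    (hinc : ∀ k, j ≤ k → k < i → f k < f (k + 1)) :
    ∀ d k, j ≤ k → k + d ≤ i → f k + d ≤ f (k + d) := by
  intro d
  induction d with
  | zero => intro k _ _; simp
  | succ d ih =>
    intro k hk hkd
    have h1 := ih k hk (by omega)
    have h2 := hinc (k + d) (by omega) (by omega)
    have : k + (d + 1) = (k + d) + 1 := by omega
    rw [this]; omega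

/-- any Macaulay-type expansion is less than `C(f i + 1, i)`. -/
lemma exp_lt {n i j : ℕ} {f : ℕ → ℕ} (h : IsMacExp n i j f) : n < (f i + 1).choose i := by
  obtain ⟨hj1, hji, hfj, hinc, hsum⟩ := h
  have hfi : i ≤ f i := f_lb hfj hinc i hji le_rfl
  set N := f i - i with hN
  have hNi : f i = N + i := by omega
  have hb : ∀ k ∈ Finset.Icc j i, (f k).choose k ≤ (N + k).choose k := by
    intro k hk
    simp only [Finset.mem_Icc] at hk
    have hu := f_ub hinc (i - k) k hk.1 (by omega)
    rw [show k + (i - k) = i from by omega] at hu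
    have hkN : f k ≤ N + k := by omega
    exact Nat.choose_le_choose _ hkN
  have h1 : n ≤ ∑ k ∈ Finset.Icc j i, (N + k).choose k := hsum ▸ Finset.sum_le_sum hb
  have h2 : ∑ k ∈ Finset.Icc j i, (N + k).choose k ≤ ∑ k ∈ Finset.Icc 1 i, (N + k).choose k :=
    Finset.sum_le_sum_of_subset (Finset.Icc_subset_Icc hj1 le_rfl)
  have h3 := hs1 N i
  have h4 : 1 ≤ (N + i + 1).choose i := Nat.choose_pos (by omega)
  have : (f i + 1).choose i = (N + i + 1).choose i := by rw [hNi]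
  omega

lemma down_le {n i j : ℕ} {f : ℕ → ℕ} (h : IsMacExp n i j f) :
    macDown i j f ≤ (f i).choose (i - 1) := by
  obtain ⟨hj1, hji, hfj, hinc, hsum⟩ := h
  have hfi : i ≤ f i := f_lb hfj hinc i hji le_rfl
  set N := f i - i with hN
  unfold macDown
  rw [sum_shift j i hj1 (by omega)]
  have hb : ∀ m ∈ Finset.Icc (j - 1) (i - 1), (f (m + 1) - 1).choose (m + 1 - 1)
      ≤ (N + m).choose m := by
    intro m hm
    simp only [Finset.mem_Icc] at hm
    have hu := f_ub hinc (i - (m + 1)) (m + 1) (by omega) (by omega)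
    rw [show m + 1 + (i - (m + 1)) = i from by omega] at hu
    have hkN : f (m + 1) - 1 ≤ N + m := by omega
    have : m + 1 - 1 = m := by omega
    rw [this]
    exact Nat.choose_le_choose _ hkN
  calc ∑ m ∈ Finset.Icc (j - 1) (i - 1), (f (m + 1) - 1).choose (m + 1 - 1)
      ≤ ∑ m ∈ Finset.Icc (j - 1) (i - 1), (N + m).choose m := Finset.sum_le_sum hb
    _ ≤ ∑ m ∈ Finset.Icc 0 (i - 1), (N + m).choose m :=
        Finset.sum_le_sum_of_subset (Finset.Icc_subset_Icc (by omega) le_rfl)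
    _ = (f i).choose (i - 1) := by
        have h0 : Finset.Icc 0 (i - 1) = insert 0 (Finset.Icc 1 (i - 1)) := by
          ext x; simp [Finset.mem_Icc]; omega
        rw [h0, Finset.sum_insert (by simp), hs1,
          show N + (i - 1) + 1 = f i from by omega]
        have h4 : 1 ≤ (f i).choose (i - 1) := Nat.choose_pos (by omega)
        simp only [Nat.add_zero, Nat.choose_zero_right]
        omega

lemma icc_bot (a b : ℕ) (h : a ≤ b) : Finset.Icc a b = insert a (Finset.Icc (a + 1) b) := by
  ext x; simp only [Finset.mem_Icc, Finset.mem_insert]; omega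

lemma sum_Icc_split (h : ℕ → ℕ) {a m b : ℕ} (h1 : a ≤ m + 1) (h2 : m ≤ b) :
    ∑ k ∈ Finset.Icc a b, h k
      = ∑ k ∈ Finset.Icc a m, h k + ∑ k ∈ Finset.Icc (m + 1) b, h k := by
  rw [← Finset.sum_union]
  · congr 1; ext x; simp only [Finset.mem_Icc, Finset.mem_union]; omega
  · rw [Finset.disjoint_left]; intro x hx hx'
    simp only [Finset.mem_Icc] at hx hx'; omega

lemma down_mono : ∀ i {n m j j' : ℕ} {f f' : ℕ → ℕ},
    IsMacExp n i j f → IsMacExp m i j' f' → n ≤ m → macDown i j f ≤ macDown i j' f' := by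
  intro i
  induction i with
  | zero => intro n m j j' f f' hn _ _; exact absurd hn.2.1 (by have := hn.1; omega)
  | succ i ih =>
    intro n m j j' f f' hn hm hnm
    obtain ⟨hj1, hji, hfj, hinc, hsum⟩ := hn
    obtain ⟨hj1', hji', hfj', hinc', hsum'⟩ := hm
    have htop_m : (f' (i + 1) - 1).choose i ≤ macDown (i + 1) j' f' := by
      have hmem : (i + 1) ∈ Finset.Icc j' (i + 1) := by
        simp only [Finset.mem_Icc]; omega
      have := Finset.single_le_sum (f := fun k => (f' k - 1).choose (k - 1))
        (fun k _ => Nat.zero_le _) hmem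
      unfold macDown; simpa using this
    rcases lt_trichotomy (f (i + 1)) (f' (i + 1)) with hlt | heq | hgt
    · have h1 : macDown (i + 1) j f ≤ (f (i + 1)).choose i := by
        have := down_le ⟨hj1, hji, hfj, hinc, hsum⟩
        simpa using this
      have h2 : (f (i + 1)).choose i ≤ (f' (i + 1) - 1).choose i :=
        Nat.choose_le_choose _ (by omega)
      omega
    · by_cases hj : j = i + 1
      · have hds : macDown (i + 1) j f = (f (i + 1) - 1).choose i := by
          subst hj; unfold macDown; simp
        rw [hds, heq]; exact htop_m
      · have hji2 : j ≤ i := by omega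
        by_cases hj' : j' = i + 1
        · exfalso
          have hm_eq : m = (f' (i + 1)).choose (i + 1) := by subst hj'; simpa using hsum'
          have hn_split : n = (∑ k ∈ Finset.Icc j i, (f k).choose k)
              + (f (i + 1)).choose (i + 1) := by
            rw [hsum, Finset.sum_Icc_succ_top (by omega)]
          have hpos : 0 < ∑ k ∈ Finset.Icc j i, (f k).choose k := by
            have hjmem : j ∈ Finset.Icc j i := by simp only [Finset.mem_Icc]; omega
            have h5 : (f j).choose j ≤ ∑ k ∈ Finset.Icc j i, (f k).choose k :=
              Finset.single_le_sum (f := fun k => (f k).choose k)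
                (fun k _ => Nat.zero_le _) hjmem
            have hc : 0 < (f j).choose j := Nat.choose_pos hfj
            omega
          rw [heq] at hn_split
          omega
        · have hji2' : j' ≤ i := by omega
          have hrec := ih (n := ∑ k ∈ Finset.Icc j i, (f k).choose k)
            (m := ∑ k ∈ Finset.Icc j' i, (f' k).choose k)
            ⟨hj1, hji2, hfj, fun k hk hki => hinc k hk (by omega), rfl⟩
            ⟨hj1', hji2', hfj', fun k hk hki => hinc' k hk (by omega), rfl⟩
            (by
              have hn_split : n = (∑ k ∈ Finset.Icc j i, (f k).choose k)
                  + (f (i + 1)).choose (i + 1) := by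
                rw [hsum, Finset.sum_Icc_succ_top (by omega)]
              have hm_split : m = (∑ k ∈ Finset.Icc j' i, (f' k).choose k)
                  + (f' (i + 1)).choose (i + 1) := by
                rw [hsum', Finset.sum_Icc_succ_top (by omega)]
              rw [heq] at hn_split
              omega)
          have hd : macDown (i + 1) j f = macDown i j f + (f (i + 1) - 1).choose i := by
            unfold macDown; rw [Finset.sum_Icc_succ_top (by omega)]; simp
          have hd' : macDown (i + 1) j' f' = macDown i j' f' + (f' (i + 1) - 1).choose i := by
            unfold macDown; rw [Finset.sum_Icc_succ_top (by omega)]; simp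
          rw [hd, hd', heq]
          omega
    · exfalso
      have h1 : m < (f' (i + 1) + 1).choose (i + 1) :=
        exp_lt ⟨hj1', hji', hfj', hinc', hsum'⟩
      have h2 : (f' (i + 1) + 1).choose (i + 1) ≤ (f (i + 1)).choose (i + 1) :=
        Nat.choose_le_choose _ (by omega)
      have h3 : (f (i + 1)).choose (i + 1) ≤ n := by
        rw [hsum]
        have hmem : (i + 1) ∈ Finset.Icc j (i + 1) := by
          simp only [Finset.mem_Icc]; omega
        exact Finset.single_le_sum (f := fun k => (f k).choose k)
          (fun k _ => Nat.zero_le _) hmem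
      omega

end MacAux

/-- The smallest integer `c` such that `a ≤ (c_(b-1))^{+1}_{+1}` is `c = (a_(b))^{-1}_{-1}`. -/
theorem stmt_4 (a b : ℕ) (ha : 1 ≤ a) (hb : 1 < b)
    (j f : _) (h : IsMacExp a b j f) :
    IsLeast {c : ℕ | ∃ j' f', IsMacExp c (b - 1) j' f' ∧ a ≤ macUp (b - 1) j' f'}
      (macDown b j f) := by
  classical
  obtain ⟨hj1, hjb, hfj, hinc, hsum⟩ := h
  have hflb : ∀ k, j ≤ k → k ≤ b → k ≤ f k := MacAux.f_lb hfj hinc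
  constructor
  · -- membership
    by_cases hj2 : 2 ≤ j
    · refine ⟨j - 1, fun m => f (m + 1) - 1, ⟨by omega, by omega, ?_, ?_, ?_⟩, ?_⟩
      · show j - 1 ≤ f (j - 1 + 1) - 1
        rw [show j - 1 + 1 = j from by omega]
        omega
      · intro k hk hkb
        show f (k + 1) - 1 < f (k + 1 + 1) - 1
        have h1 := hinc (k + 1) (by omega) (by omega)
        have h2 := hflb (k + 1) (by omega) (by omega)
        omega
      · show macDown b j f = ∑ k ∈ Finset.Icc (j - 1) (b - 1), (f (k + 1) - 1).choose k
        unfold macDown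
        rw [MacAux.sum_shift j b hj1 (by omega)]
        rfl
      · have hUa : macUp (b - 1) (j - 1) (fun m => f (m + 1) - 1) = a := by
          unfold macUp
          rw [hsum, MacAux.sum_shift j b hj1 (by omega)]
          refine Finset.sum_congr rfl (fun m hm => ?_)
          simp only [Finset.mem_Icc] at hm
          have := hflb (m + 1) (by omega) (by omega)
          rw [show f (m + 1) - 1 + 1 = f (m + 1) from by omega]
        omega
    · have hjone : j = 1 := by omega
      subst hjone
      have hex : ∃ t, 1 ≤ t ∧ t ≤ b - 1 ∧
          (∀ l, 2 ≤ l → l ≤ t + 1 → f l = f 2 + (l - 2)) ∧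
          (t < b - 1 → ¬ ∀ l, 2 ≤ l → l ≤ t + 2 → f l = f 2 + (l - 2)) := by
        set P : ℕ → Prop := fun m => ∀ l, 2 ≤ l → l ≤ m + 1 → f l = f 2 + (l - 2) with hPdef
        have hP1 : P 1 := by
          intro l h2 h2'
          have hl2 : l = 2 := by omega
          subst hl2; simp
        refine ⟨Nat.findGreatest P (b - 1), Nat.le_findGreatest (by omega) hP1,
          Nat.findGreatest_le _, ?_, ?_⟩
        · exact Nat.findGreatest_spec (show 1 ≤ b - 1 by omega) hP1
        · intro hlt hall
          exact Nat.findGreatest_is_greatest (P := P) (n := b - 1) (k := Nat.findGreatest P (b - 1) + 1)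
            (by omega) (by omega) hall
      obtain ⟨t, ht1, htb, hPt, hmax⟩ := hex
      have hf2 : 2 ≤ f 2 := hflb 2 (by omega) (by omega)
      have hft1 : f (t + 1) = f 2 + t - 1 := by
        have := hPt (t + 1) (by omega) (by omega)
        omega
      have htlb : t + 1 ≤ f (t + 1) := hflb (t + 1) (by omega) (by omega)
      have hnext : t < b - 1 → f 2 + t + 1 ≤ f (t + 2) := by
        intro hlt
        have hnp := hmax hlt
        push_neg at hnp
        obtain ⟨l, hl2, hlt1, hne⟩ := hnp
        have hl : l = t + 2 := by
          by_contra hc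
          exact hne (hPt l hl2 (by omega))
        subst hl
        have hi2 := hinc (t + 1) (by omega) (by omega)
        have he : t + 1 + 1 = t + 2 := by omega
        rw [he] at hi2
        omega
      refine ⟨t, fun m => if m = t then f (t + 1) else f (m + 1) - 1,
        ⟨by omega, by omega, ?_, ?_, ?_⟩, ?_⟩
      · show t ≤ if t = t then f (t + 1) else f (t + 1) - 1
        rw [if_pos rfl]
        omega
      · intro k hk hkb
        show (if k = t then f (t + 1) else f (k + 1) - 1)
            < (if k + 1 = t then f (t + 1) else f (k + 1 + 1) - 1)
        rw [if_neg (show ¬ k + 1 = t by omega)]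
        by_cases hkt : k = t
        · rw [if_pos hkt, hkt]
          have h1 := hnext (by omega)
          have he : t + 1 + 1 = t + 2 := by omega
          rw [he]
          omega
        · rw [if_neg hkt]
          have h1 := hinc (k + 1) (by omega) (by omega)
          have h2 := hflb (k + 1) (by omega) (by omega)
          omega
      · show macDown b 1 f
            = ∑ k ∈ Finset.Icc t (b - 1), (if k = t then f (t + 1) else f (k + 1) - 1).choose k
        have hsplitL : macDown b 1 f
            = (∑ k ∈ Finset.Icc 1 (t + 1), (f k - 1).choose (k - 1))
              + ∑ k ∈ Finset.Icc (t + 2) b, (f k - 1).choose (k - 1) := by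
          unfold macDown
          exact MacAux.sum_Icc_split _ (by omega) (by omega)
        have hfirst : ∑ k ∈ Finset.Icc 1 (t + 1), (f k - 1).choose (k - 1)
            = (f (t + 1)).choose t := by
          rw [MacAux.sum_shift 1 (t + 1) le_rfl (by omega)]
          simp only [show (1 : ℕ) - 1 = 0 from rfl, Nat.add_sub_cancel]
          rw [MacAux.icc_bot 0 t (by omega), Finset.sum_insert (by simp)]
          have hcong : ∑ m ∈ Finset.Icc 1 t, (f (m + 1) - 1).choose m
              = ∑ m ∈ Finset.Icc 1 t, ((f 2 - 2) + m).choose m := by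
            refine Finset.sum_congr rfl (fun m hm => ?_)
            simp only [Finset.mem_Icc] at hm
            have := hPt (m + 1) (by omega) (by omega)
            have he : f (m + 1) - 1 = f 2 - 2 + m := by omega
            rw [he]
          rw [hcong, MacAux.hs1]
          have hpos : 1 ≤ (f (t + 1)).choose t := Nat.choose_pos (by omega)
          have he2 : f 2 - 2 + t + 1 = f (t + 1) := by omega
          rw [he2]
          simp only [Nat.choose_zero_right]
          omega
        have hsecond : ∑ k ∈ Finset.Icc (t + 2) b, (f k - 1).choose (k - 1)
            = ∑ m ∈ Finset.Icc (t + 1) (b - 1), (f (m + 1) - 1).choose m := by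
          rw [MacAux.sum_shift (t + 2) b (by omega) (by omega)]
          rfl
        have hR : ∑ k ∈ Finset.Icc t (b - 1),
              (if k = t then f (t + 1) else f (k + 1) - 1).choose k
            = (f (t + 1)).choose t
              + ∑ m ∈ Finset.Icc (t + 1) (b - 1), (f (m + 1) - 1).choose m := by
          rw [MacAux.icc_bot t (b - 1) (by omega),
            Finset.sum_insert (by simp only [Finset.mem_Icc]; omega)]
          rw [if_pos rfl]
          congr 1
          refine Finset.sum_congr rfl (fun m hm => ?_)
          simp only [Finset.mem_Icc] at hm
          rw [if_neg (by omega)]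
        rw [hsplitL, hfirst, hsecond, hR]
      · have htrunc : (∑ k ∈ Finset.Icc 1 (t + 1), (f k).choose k)
            < (f (t + 1) + 1).choose (t + 1) :=
          MacAux.exp_lt ⟨le_rfl, by omega, hfj, fun k hk hki => hinc k hk (by omega), rfl⟩
        have hA : a = (∑ k ∈ Finset.Icc 1 (t + 1), (f k).choose k)
            + ∑ k ∈ Finset.Icc (t + 2) b, (f k).choose k := by
          rw [hsum]; exact MacAux.sum_Icc_split _ (by omega) (by omega)
        have hU : macUp (b - 1) t (fun m => if m = t then f (t + 1) else f (m + 1) - 1)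
            = (f (t + 1) + 1).choose (t + 1)
              + ∑ k ∈ Finset.Icc (t + 2) b, (f k).choose k := by
          unfold macUp
          rw [MacAux.icc_bot t (b - 1) (by omega),
            Finset.sum_insert (by simp only [Finset.mem_Icc]; omega)]
          beta_reduce
          rw [if_pos rfl]
          congr 1
          rw [MacAux.sum_shift (t + 2) b (by omega) (by omega)]
          refine Finset.sum_congr rfl (fun m hm => ?_)
          simp only [Finset.mem_Icc] at hm
          rw [if_neg (show ¬ m = t by omega)]
          have := hflb (m + 1) (by omega) (by omega)
          rw [show f (m + 1) - 1 + 1 = f (m + 1) from by omega]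
        omega
  · rintro c' ⟨j', f', ⟨hj1', hjb', hfj', hinc', hsum'⟩, hup⟩
    have hu : IsMacExp (macUp (b - 1) j' f') b (j' + 1) (fun k => f' (k - 1) + 1) := by
      refine ⟨by omega, by omega, ?_, ?_, ?_⟩
      · show j' + 1 ≤ f' (j' + 1 - 1) + 1
        rw [show j' + 1 - 1 = j' from rfl]
        omega
      · intro k hk hkb
        show f' (k - 1) + 1 < f' (k + 1 - 1) + 1
        have h1 := hinc' (k - 1) (by omega) (by omega)
        rw [show k - 1 + 1 = k from by omega] at h1
        rw [show k + 1 - 1 = k from rfl]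
        omega
      · show macUp (b - 1) j' f' = ∑ k ∈ Finset.Icc (j' + 1) b, (f' (k - 1) + 1).choose k
        unfold macUp
        rw [MacAux.sum_shift (j' + 1) b (by omega) (by omega)]
        rfl
    have hdg : macDown b (j' + 1) (fun k => f' (k - 1) + 1) = c' := by
      unfold macDown
      rw [MacAux.sum_shift (j' + 1) b (by omega) (by omega), hsum']
      rfl
    have hmono := MacAux.down_mono b ⟨hj1, hjb, hfj, hinc, hsum⟩ hu hup
    omega
end

section
/- For positive integers a and i, ((a_(i))^{-1}_{-1})_{(i-1)})^{+1}_{+1} ≥ a, i.e. applying the Macaulay lower shift followed by the upper shift returns a value at least a. -/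
def GE (n i j : ℕ) (f : ℕ → ℕ) : Prop :=
  j ≤ i ∧ j ≤ f j ∧ (∀ k, j ≤ k → k < i → f k < f (k + 1)) ∧
    n = ∑ k ∈ Finset.Icc j i, (f k).choose k

lemma GE.le_f {n i j : ℕ} {f : ℕ → ℕ} (h : GE n i j f) :
    ∀ k, j ≤ k → k ≤ i → k ≤ f k := by
  obtain ⟨hji, hjf, hmono, -⟩ := h
  intro k hjk
  induction k, hjk using Nat.le_induction with
  | base => intro _; exact hjf
  | succ k hk ih =>
    intro hki
    have h1 := ih (by omega)
    have h2 := hmono k hk (by omega)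
    omega

lemma sum_Icc_shift (a b : ℕ) (F : ℕ → ℕ) :
    ∑ k ∈ Finset.Icc (a+1) (b+1), F k = ∑ k ∈ Finset.Icc a b, F (k+1) := by
  rw [← Finset.map_add_right_Icc, Finset.sum_map]
  rfl

lemma GE.lt_bound : ∀ i n j (f : ℕ → ℕ), GE n i j f → 1 ≤ j → n < (f i + 1).choose i := by
  intro i
  induction i using Nat.strong_induction_on with
  | _ i IH =>
    intro n j f h hj
    obtain ⟨hji, hjf, hmono, hsum⟩ := h
    rcases eq_or_lt_of_le hji with rfl | hlt
    · rw [hsum, Finset.Icc_self, Finset.sum_singleton]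
      obtain ⟨m, rfl⟩ : ∃ m, j = m + 1 := ⟨j - 1, by omega⟩
      rw [Nat.choose_succ_succ]
      simp only [Nat.succ_eq_add_one]
      have : 0 < (f (m+1)).choose m := Nat.choose_pos (by omega)
      omega
    · obtain ⟨m, rfl⟩ : ∃ m, i = m + 1 := ⟨i - 1, by omega⟩
      have hrest : GE (∑ k ∈ Finset.Icc j m, (f k).choose k) m j f :=
        ⟨by omega, hjf, fun k hk hk' => hmono k hk (by omega), rfl⟩
      have ih := IH m (by omega) _ j f hrest hj
      have hfm : f m < f (m+1) := hmono m (by omega) (by omega)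
      have h1 : (f m + 1).choose m ≤ (f (m+1)).choose m := Nat.choose_le_choose m (by omega)
      have h2 : n = (∑ k ∈ Finset.Icc j m, (f k).choose k) + (f (m+1)).choose (m+1) := by
        rw [hsum, Finset.sum_Icc_succ_top (by omega : j ≤ m + 1)]
      rw [Nat.choose_succ_succ]
      simp only [Nat.succ_eq_add_one]
      omega

lemma GE.up {n i j : ℕ} {f : ℕ → ℕ} (h : GE n i j f) :
    GE (macUp i j f) (i+1) (j+1) (fun k => f (k-1) + 1) := by
  obtain ⟨hji, hjf, hmono, -⟩ := h
  refine ⟨by omega, by simpa using by omega, ?_, ?_⟩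
  · intro k hk hk'
    simp only [Nat.add_sub_cancel]
    have hk1 : k - 1 + 1 = k := by omega
    have := hmono (k-1) (by omega) (by omega)
    rw [hk1] at this
    omega
  · rw [macUp, sum_Icc_shift]
    simp [Nat.add_sub_cancel]

lemma macUp_mono : ∀ i n n' j j' (f g : ℕ → ℕ), 1 ≤ i → GE n i j f → GE n' i j' g →
    1 ≤ j' → n ≤ n' → macUp i j f ≤ macUp i j' g := by
  intro i
  induction i using Nat.strong_induction_on with
  | _ i IH =>
    intro n n' j j' f g hi h h' hj' hnn
    obtain ⟨hji, hjf, hmono, hsum⟩ := h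
    obtain ⟨hji', hjf', hmono', hsum'⟩ := h'
    have htop : f i ≤ g i := by
      have h1 : (f i).choose i ≤ n := by
        rw [hsum]
        exact Finset.single_le_sum (f := fun k => (f k).choose k)
          (fun _ _ => Nat.zero_le _) (Finset.mem_Icc.mpr ⟨hji, le_rfl⟩)
      have h2 : n' < (g i + 1).choose i :=
        GE.lt_bound i n' j' g ⟨hji', hjf', hmono', hsum'⟩ hj'
      by_contra hc
      push_neg at hc
      have h3 : (g i + 1).choose i ≤ (f i).choose i := Nat.choose_le_choose i (by omega)
      omega
    rcases lt_or_eq_of_le htop with hlt | heq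
    · -- f i < g i
      have hb := GE.lt_bound (i+1) _ _ _ (GE.up ⟨hji, hjf, hmono, hsum⟩) (by omega)
      simp only [Nat.add_sub_cancel] at hb
      have h2 : (g i + 1).choose (i+1) ≤ macUp i j' g :=
        Finset.single_le_sum (f := fun k => (g k + 1).choose (k+1))
          (fun _ _ => Nat.zero_le _) (Finset.mem_Icc.mpr ⟨hji', le_rfl⟩)
      have h3 : (f i + 1 + 1).choose (i+1) ≤ (g i + 1).choose (i+1) :=
        Nat.choose_le_choose _ (by omega)
      omega
    · -- f i = g i
      by_cases hji2 : j = i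
      · subst hji2
        have h1 : macUp j j f = (f j + 1).choose (j + 1) := by
          rw [macUp, Finset.Icc_self, Finset.sum_singleton]
        have h2 : (g j + 1).choose (j+1) ≤ macUp j j' g :=
          Finset.single_le_sum (f := fun k => (g k + 1).choose (k+1))
            (fun _ _ => Nat.zero_le _) (Finset.mem_Icc.mpr ⟨hji', le_rfl⟩)
        rw [h1, heq]
        exact h2
      · have hjlt : j < i := lt_of_le_of_ne hji hji2
        obtain ⟨m, rfl⟩ : ∃ m, i = m + 1 := ⟨i - 1, by omega⟩
        have hsum2 : n = (∑ k ∈ Finset.Icc j m, (f k).choose k) + (f (m+1)).choose (m+1) := by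
          rw [hsum, Finset.sum_Icc_succ_top (by omega : j ≤ m + 1)]
        by_cases hji2' : j' = m + 1
        · exfalso
          have h1 : n' = (g (m+1)).choose (m+1) := by
            rw [hsum', hji2', Finset.Icc_self, Finset.sum_singleton]
          have h2 : 0 < (f j).choose j := Nat.choose_pos hjf
          have h3 : (f j).choose j ≤ ∑ k ∈ Finset.Icc j m, (f k).choose k :=
            Finset.single_le_sum (f := fun k => (f k).choose k)
              (fun _ _ => Nat.zero_le _) (Finset.mem_Icc.mpr ⟨le_rfl, by omega⟩)
          have hch : (f (m+1)).choose (m+1) = (g (m+1)).choose (m+1) := by rw [heq]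
          omega
        · have hjlt' : j' < m + 1 := lt_of_le_of_ne hji' hji2'
          have hm1 : 1 ≤ m := by omega
          have hsum2' : n' = (∑ k ∈ Finset.Icc j' m, (g k).choose k) + (g (m+1)).choose (m+1) := by
            rw [hsum', Finset.sum_Icc_succ_top (by omega : j' ≤ m + 1)]
          have hch : (f (m+1)).choose (m+1) = (g (m+1)).choose (m+1) := by rw [heq]
          have hrest : GE (∑ k ∈ Finset.Icc j m, (f k).choose k) m j f :=
            ⟨by omega, hjf, fun k hk hk' => hmono k hk (by omega), rfl⟩
          have hrest' : GE (∑ k ∈ Finset.Icc j' m, (g k).choose k) m j' g :=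
            ⟨by omega, hjf', fun k hk hk' => hmono' k hk (by omega), rfl⟩
          have ih := IH m (by omega) _ _ j j' f g hm1 hrest hrest' hj' (by omega)
          have e1 : macUp (m+1) j f = macUp m j f + (f (m+1) + 1).choose (m+2) := by
            rw [macUp, macUp, Finset.sum_Icc_succ_top (by omega : j ≤ m + 1)]
          have e2 : macUp (m+1) j' g = macUp m j' g + (g (m+1) + 1).choose (m+2) := by
            rw [macUp, macUp, Finset.sum_Icc_succ_top (by omega : j' ≤ m + 1)]
          rw [e1, e2, heq]
          omega

/-- Applying the Macaulay lower shift (at level `i`) followed by the upper shift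
(at level `i-1`) returns a value at least `a`. -/
theorem stmt_5 (a i : ℕ) (ha : 1 ≤ a) (hi : 2 ≤ i)
    (j f : _) (h : IsMacExp a i j f)
    (j' g : _) (h' : IsMacExp (macDown i j f) (i - 1) j' g) :
    a ≤ macUp (i - 1) j' g := by
  obtain ⟨hj1, hji, hjf, hmono, hsum⟩ := h
  obtain ⟨hj1', hji', hjf', hmono', hsum'⟩ := h'
  have hge : GE a i j f := ⟨hji, hjf, hmono, hsum⟩
  have hle := GE.le_f hge
  -- the shifted-down generalized expansion of macDown i j f at level i-1
  have hd : GE (macDown i j f) (i-1) (j-1) (fun k => f (k+1) - 1) := by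
    refine ⟨by omega, ?_, ?_, ?_⟩
    · have hk1 : j - 1 + 1 = j := by omega
      simp only [hk1]
      omega
    · intro k hk hk'
      simp only
      have hrw : k + 1 + 1 = k + 2 := by omega
      rw [hrw]
      have h1 : f (k+1) < f (k+2) := hmono (k+1) (by omega) (by omega)
      have h2 : k + 1 ≤ f (k+1) := hle (k+1) (by omega) (by omega)
      omega
    · rw [macDown]
      have e1 : Finset.Icc j i = Finset.Icc ((j-1)+1) ((i-1)+1) := by
        congr 1 <;> omega
      rw [e1, sum_Icc_shift]
      exact Finset.sum_congr rfl (fun k hk => by simp)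
  -- macUp of this generalized expansion is exactly a
  have hup : macUp (i-1) (j-1) (fun k => f (k+1) - 1) = a := by
    rw [macUp, hsum]
    have e1 : Finset.Icc j i = Finset.Icc ((j-1)+1) ((i-1)+1) := by
      congr 1 <;> omega
    rw [e1, sum_Icc_shift]
    refine Finset.sum_congr rfl (fun k hk => ?_)
    simp only [Finset.mem_Icc] at hk
    have h2 : k + 1 ≤ f (k+1) := hle (k+1) (by omega) (by omega)
    have h3 : f (k+1) - 1 + 1 = f (k+1) := by omega
    rw [h3]
  have hg : GE (macDown i j f) (i-1) j' g := ⟨hji', hjf', hmono', hsum'⟩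
  have hm := macUp_mono (i-1) (macDown i j f) (macDown i j f) (j-1) j'
    (fun k => f (k+1) - 1) g (by omega) hd hg hj1' le_rfl
  rwa [hup] at hm
end

section
/- Let h' be a positive integer and d ≥ 1, and suppose the d-binomial expansion of h' is h' = C(n_d, d) + ... + C(n_j, j). Then (h'_(d))^{+1}_{+1} has (d+1)-binomial expansion with terms C(n_d + 1, d+1), ..., C(n_j + 1, j+1), i.e. the upper-shifted expansion is itself a valid (d+1)-binomial expansion of the shifted value. -/
/-- The upper-shifted expansion of the `d`-binomial expansion of `h'` is itself a valid
`(d+1)`-binomial expansion of `(h'_(d))^{+1}_{+1}`. -/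
theorem stmt_7 (h' d j : ℕ) (f : ℕ → ℕ) (hd : 1 ≤ d) (hh : 1 ≤ h')
    (h : IsMacExp h' d j f) :
    IsMacExp (macUp d j f) (d + 1) (j + 1) (fun k => f (k - 1) + 1) := by
  obtain ⟨h1, h2, h3, h4, h5⟩ := h
  refine ⟨by omega, by omega, by simpa using h3, ?_, ?_⟩
  · intro k hk hk'
    simp only
    have := h4 (k - 1) (by omega) (by omega)
    have hk1 : k - 1 + 1 = k := by omega
    rw [hk1] at this
    simpa [Nat.add_sub_cancel] using Nat.succ_lt_succ this
  · rw [macUp]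
    rw [show Finset.Icc (j + 1) (d + 1) = (Finset.Icc j d).image (· + 1) by
      rw [Finset.image_add_right_Icc]]
    rw [Finset.sum_image (fun a _ b _ h => by omega)]
    exact Finset.sum_congr rfl fun k _ => by simp
end

section
/- Let h = (1, h_1, ..., h_e) be an O-sequence (i.e. a sequence satisfying Macaulay's growth condition h_{d+1} ≤ ((h_d)_(d))^{+1}_{+1} for 1 ≤ d ≤ e-1, with h_0 = 1). Define s_e = h_e and, for 1 ≤ i ≤ e-1, s_i = h_i - ((h_{i+1})_(i+1))^{-1}_{-1}. Then s_i ≥ 0 for all i. -/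
/-- Strict monotonicity of `choose` in the first argument (above the diagonal). -/
lemma my_choose_lt_choose {a b k : ℕ} (hk : 1 ≤ k) (ha : k ≤ a) (hab : a < b) :
    a.choose k < b.choose k := by
  obtain ⟨t, rfl⟩ := Nat.exists_eq_add_of_le hk
  calc a.choose (1 + t) < (a + 1).choose (1 + t) := by
        have h1 : (a + 1).choose (t + 1) = a.choose t + a.choose (t + 1) :=
          Nat.choose_succ_succ a t
        have h2 : 0 < a.choose t := Nat.choose_pos (by omega)
        rw [Nat.add_comm 1 t] at ha ⊢
        omega
    _ ≤ b.choose (1 + t) := Nat.choose_le_choose _ (by omega)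

/-- Lower bound: `C(m, k) ≥ m - k + 1` for `1 ≤ k ≤ m`. -/
lemma my_choose_lower {k : ℕ} (hk : 1 ≤ k) : ∀ m, k ≤ m → m - k + 1 ≤ m.choose k := by
  intro m hm
  induction m, hm using Nat.le_induction with
  | base => simp [Nat.choose_self]
  | succ m hm ih =>
      have := my_choose_lt_choose hk hm (Nat.lt_succ_self m)
      simp only [Nat.succ_eq_add_one] at this ih ⊢
      omega

/-- In an expansion, `f k ≥ k` on the range. -/
lemma fk_ge {f : ℕ → ℕ} {i j : ℕ} (hfj : j ≤ f j)
    (hchain : ∀ k, j ≤ k → k < i → f k < f (k + 1)) :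
    ∀ k, j ≤ k → k ≤ i → k ≤ f k := by
  intro k hk
  induction k, hk using Nat.le_induction with
  | base => intro _; exact hfj
  | succ k hk ih =>
      intro hki
      have h1 := ih (by omega)
      have h2 := hchain k hk (by omega)
      omega

/-- The sum of an expansion with top `f i` is less than `C(f i + 1, i)`. -/
lemma sum_lt_top {f : ℕ → ℕ} {j : ℕ} (hj : 1 ≤ j) (hfj : j ≤ f j) :
    ∀ i, j ≤ i → (∀ k, j ≤ k → k < i → f k < f (k + 1)) →
      ∑ k ∈ Finset.Icc j i, (f k).choose k < (f i + 1).choose i := by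
  intro i hi
  induction i, hi using Nat.le_induction with
  | base =>
      intro _
      rw [Finset.Icc_self, Finset.sum_singleton]
      exact my_choose_lt_choose hj hfj (Nat.lt_succ_self _)
  | succ i hi ih =>
      intro hchain
      have hchain' : ∀ k, j ≤ k → k < i → f k < f (k + 1) := fun k h1 h2 =>
        hchain k h1 (by omega)
      have hlt := ih hchain'
      rw [Finset.sum_Icc_succ_top (by omega)]
      have hfi : f i + 1 ≤ f (i + 1) := hchain i hi (by omega)
      have h1 : (f i + 1).choose i ≤ (f (i + 1)).choose i :=
        Nat.choose_le_choose _ hfi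
      have hge : i + 1 ≤ f (i + 1) := by
        have := fk_ge hfj hchain' i hi le_rfl
        omega
      have h2 : (f (i + 1) + 1).choose (i + 1) =
          (f (i + 1)).choose i + (f (i + 1)).choose (i + 1) :=
        Nat.choose_succ_succ _ _
      omega

/-- The down-shift of an expansion with top `f i` is at most `C(f i, i - 1)`. -/
lemma down_le_top {f : ℕ → ℕ} {j : ℕ} (hj : 1 ≤ j) (hfj : j ≤ f j) :
    ∀ i, j ≤ i → (∀ k, j ≤ k → k < i → f k < f (k + 1)) →
      ∑ k ∈ Finset.Icc j i, (f k - 1).choose (k - 1) ≤ (f i).choose (i - 1) := by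
  intro i hi
  induction i, hi using Nat.le_induction with
  | base =>
      intro _
      rw [Finset.Icc_self, Finset.sum_singleton]
      exact Nat.choose_le_choose _ (by omega)
  | succ i hi ih =>
      intro hchain
      have hchain' : ∀ k, j ≤ k → k < i → f k < f (k + 1) := fun k h1 h2 =>
        hchain k h1 (by omega)
      have hle := ih hchain'
      rw [Finset.sum_Icc_succ_top (by omega)]
      have hfi : f i + 1 ≤ f (i + 1) := hchain i hi (by omega)
      have hge : i + 1 ≤ f (i + 1) := by
        have := fk_ge hfj hchain' i hi le_rfl
        omega
      have h1 : (f i).choose (i - 1) ≤ (f (i + 1) - 1).choose (i - 1) :=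
        Nat.choose_le_choose _ (by omega)
      have h2 : (f (i + 1)).choose i =
          (f (i + 1) - 1).choose (i - 1) + (f (i + 1) - 1).choose i := by
        obtain ⟨m, hm⟩ : ∃ m, f (i + 1) = m + 1 := ⟨f (i + 1) - 1, by omega⟩
        obtain ⟨t, ht⟩ : ∃ t, i = t + 1 := ⟨i - 1, by omega⟩
        rw [hm, ht]
        simpa using Nat.choose_succ_succ m t
      simp only [Nat.add_sub_cancel]
      omega

/-- Monotonicity of `macDown` on expansions. -/
lemma macDown_mono : ∀ i m m' j j' f f', IsMacExp m i j f → IsMacExp m' i j' f' →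
    m ≤ m' → macDown i j f ≤ macDown i j' f' := by
  intro i
  induction i with
  | zero => intro m m' j j' f f' hm _ _; exact absurd hm.2.1 (by have := hm.1; omega)
  | succ i ih =>
      intro m m' j j' f f' hm hm' hle
      obtain ⟨hj1, hji, hfj, hchain, hsum⟩ := hm
      obtain ⟨hj1', hji', hfj', hchain', hsum'⟩ := hm'
      -- top terms
      have htopm : (f (i + 1)).choose (i + 1) ≤ m := by
        rw [hsum]
        exact Finset.single_le_sum (f := fun k => (f k).choose k)
          (fun _ _ => Nat.zero_le _) (by simp [Finset.mem_Icc]; omega)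
      have htopm' : (f' (i + 1)).choose (i + 1) ≤ m' := by
        rw [hsum']
        exact Finset.single_le_sum (f := fun k => (f' k).choose k)
          (fun _ _ => Nat.zero_le _) (by simp [Finset.mem_Icc]; omega)
      have hlt' : m' < (f' (i + 1) + 1).choose (i + 1) := by
        rw [hsum']; exact sum_lt_top hj1' hfj' (i + 1) hji' hchain'
      have hge : i + 1 ≤ f (i + 1) := fk_ge hfj hchain (i + 1) hji le_rfl
      have hge' : i + 1 ≤ f' (i + 1) := fk_ge hfj' hchain' (i + 1) hji' le_rfl
      have htople : f (i + 1) ≤ f' (i + 1) := by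
        by_contra hcon
        push_neg at hcon
        have : (f' (i + 1) + 1).choose (i + 1) ≤ (f (i + 1)).choose (i + 1) :=
          Nat.choose_le_choose _ (by omega)
        omega
      rcases Nat.lt_or_ge (f (i + 1)) (f' (i + 1)) with hcase | hcase
      · -- tops differ: use down_le_top
        have h1 : macDown (i + 1) j f ≤ (f (i + 1)).choose i := by
          have := down_le_top hj1 hfj (i + 1) hji hchain
          simpa [macDown] using this
        have h2 : (f (i + 1)).choose i ≤ (f' (i + 1) - 1).choose i :=
          Nat.choose_le_choose _ (by omega)
        have h3 : (f' (i + 1) - 1).choose i ≤ macDown (i + 1) j' f' := by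
          unfold macDown
          exact Finset.single_le_sum (f := fun k => (f' k - 1).choose (k - 1))
            (fun _ _ => Nat.zero_le _) (by simp [Finset.mem_Icc]; omega)
        omega
      · -- equal tops
        have heq : f (i + 1) = f' (i + 1) := by omega
        rcases Nat.lt_or_ge j (i + 1) with hj | hj
        · -- j < i + 1
          have hsplit : m = (∑ k ∈ Finset.Icc j i, (f k).choose k) +
              (f' (i + 1)).choose (i + 1) := by
            rw [hsum, Finset.sum_Icc_succ_top (by omega), heq]
          rcases Nat.lt_or_ge j' (i + 1) with hj' | hj'
          · -- both go down: induction
            have hsplit' : m' = (∑ k ∈ Finset.Icc j' i, (f' k).choose k) +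
                (f' (i + 1)).choose (i + 1) := by
              rw [hsum', Finset.sum_Icc_succ_top (by omega)]
            have hmrec : IsMacExp (∑ k ∈ Finset.Icc j i, (f k).choose k) i j f :=
              ⟨hj1, by omega, hfj, fun k h1 h2 => hchain k h1 (by omega), rfl⟩
            have hmrec' : IsMacExp (∑ k ∈ Finset.Icc j' i, (f' k).choose k) i j' f' :=
              ⟨hj1', by omega, hfj', fun k h1 h2 => hchain' k h1 (by omega), rfl⟩
            have := ih _ _ _ _ _ _ hmrec hmrec' (by omega)
            unfold macDown at this ⊢
            rw [Finset.sum_Icc_succ_top (a := j) (by omega),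
              Finset.sum_Icc_succ_top (a := j') (by omega), heq]
            omega
          · -- j' = i + 1 : contradiction, m has extra positive terms
            have hj'eq : j' = i + 1 := by omega
            have hm'eq : m' = (f' (i + 1)).choose (i + 1) := by
              rw [hsum', hj'eq, Finset.Icc_self, Finset.sum_singleton]
            have hpos : 0 < (f j).choose j := Nat.choose_pos hfj
            have hjle : (f j).choose j ≤ ∑ k ∈ Finset.Icc j i, (f k).choose k :=
              Finset.single_le_sum (f := fun k => (f k).choose k)
                (fun _ _ => Nat.zero_le _) (by simp [Finset.mem_Icc]; omega)
            omega
        · -- j = i + 1 : macDown f is a single term present in macDown f'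
          have hjeq : j = i + 1 := by omega
          unfold macDown
          rw [hjeq, Finset.Icc_self, Finset.sum_singleton, heq]
          exact Finset.single_le_sum (f := fun k => (f' k - 1).choose (k - 1))
            (fun _ _ => Nat.zero_le _) (by simp [Finset.mem_Icc]; omega)

/-- Existence of Macaulay expansions. -/
lemma macExp_exists : ∀ i, 1 ≤ i → ∀ n, 1 ≤ n → ∃ j f, IsMacExp n i j f := by
  intro i hi
  induction i, hi using Nat.le_induction with
  | base =>
      intro n hn
      exact ⟨1, fun _ => n, le_rfl, le_rfl, hn, fun k h1 h2 => by omega,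
        by rw [Finset.Icc_self, Finset.sum_singleton, Nat.choose_one_right]⟩
  | succ i hi ih =>
      intro n hn
      set P : ℕ → Prop := fun a => a.choose (i + 1) ≤ n with hP
      have hPd : DecidablePred P := fun a => inferInstanceAs (Decidable (_ ≤ _))
      set a := Nat.findGreatest P (n + i + 1) with ha
      have hP1 : P (i + 1) := by simp [hP, Nat.choose_self]; omega
      have hage : i + 1 ≤ a := Nat.le_findGreatest (by omega) hP1
      have haP : P a := Nat.findGreatest_spec (m := i + 1) (by omega) hP1
      have hale : a ≤ n + i := by
        by_contra hcon
        push_neg at hcon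
        have h1 : a ≤ n + i + 1 := Nat.findGreatest_le _
        have h2 : a = n + i + 1 := by omega
        have := my_choose_lower (k := i + 1) (by omega) a (by omega)
        simp only [hP] at haP
        omega
      have hmax : ¬ P (a + 1) := Nat.findGreatest_is_greatest (n := n + i + 1) (by omega) (by omega)
      simp only [hP] at haP hmax
      push_neg at hmax
      rcases Nat.eq_or_lt_of_le haP with heq | hlt
      · -- n = C(a, i+1), single term
        exact ⟨i + 1, fun _ => a, by omega, le_rfl, hage, fun k h1 h2 => by omega,
          by rw [Finset.Icc_self, Finset.sum_singleton, heq]⟩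
      · -- remainder positive
        set r := n - a.choose (i + 1) with hr
        have hr1 : 1 ≤ r := by omega
        obtain ⟨j, g, hj1, hji, hgj, hchain, hsum⟩ := ih r hr1
        have hrlt : r < a.choose i := by
          have : (a + 1).choose (i + 1) = a.choose i + a.choose (i + 1) :=
            Nat.choose_succ_succ a i
          omega
        have hgi : g i < a := by
          have h1 : (g i).choose i ≤ r := by
            rw [hsum]
            exact Finset.single_le_sum (f := fun k => (g k).choose k)
              (fun _ _ => Nat.zero_le _) (by simp [Finset.mem_Icc]; omega)
          by_contra hcon
          push_neg at hcon
          have := Nat.choose_le_choose i hcon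
          omega
        refine ⟨j, fun k => if k = i + 1 then a else g k, hj1, by omega, ?_, ?_, ?_⟩
        · simp only [if_neg (by omega : j ≠ i + 1)]; exact hgj
        · intro k h1 h2
          rcases Nat.lt_or_ge k i with hk | hk
          · simp only [if_neg (by omega : k ≠ i + 1), if_neg (by omega : k + 1 ≠ i + 1)]
            exact hchain k h1 hk
          · have hk' : k = i := by omega
            subst hk'
            show (if k = k + 1 then a else g k) < (if k + 1 = k + 1 then a else g (k + 1))
            rw [if_neg (show ¬ k = k + 1 by omega), if_pos rfl]
            exact hgi
        · rw [Finset.sum_Icc_succ_top (by omega)]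
          have e1 : ∑ k ∈ Finset.Icc j i, (if k = i + 1 then a else g k).choose k =
              ∑ k ∈ Finset.Icc j i, (g k).choose k := by
            apply Finset.sum_congr rfl
            intro k hk
            simp only [Finset.mem_Icc] at hk
            rw [if_neg (show ¬ k = i + 1 by omega)]
          have e2 : (if i + 1 = i + 1 then a else g (i + 1)).choose (i + 1) =
              a.choose (i + 1) := by rw [if_pos rfl]
          rw [e1, e2]
          omega

/-- `macUp` of an expansion of `n` is itself an expansion (shifted), whose
`macDown` is `n` again. -/
lemma macUp_exp {n i j : ℕ} {g : ℕ → ℕ} (hg : IsMacExp n i j g) :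
    IsMacExp (macUp i j g) (i + 1) (j + 1) (fun k => g (k - 1) + 1) ∧
      macDown (i + 1) (j + 1) (fun k => g (k - 1) + 1) = n := by
  obtain ⟨hj1, hji, hgj, hchain, hsum⟩ := hg
  have hre : ∀ (F : ℕ → ℕ), ∑ k ∈ Finset.Icc (j + 1) (i + 1), F k =
      ∑ k ∈ Finset.Icc j i, F (k + 1) := by
    intro F
    rw [← Finset.map_add_right_Icc j i 1, Finset.sum_map]
    rfl
  constructor
  · refine ⟨by omega, by omega, ?_, ?_, ?_⟩
    · simp only [Nat.add_sub_cancel]; omega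
    · intro k h1 h2
      have hc := hchain (k - 1) (by omega) (by omega)
      rw [show k - 1 + 1 = k from by omega] at hc
      simp only [Nat.add_sub_cancel]
      omega
    · unfold macUp
      rw [hre]
      apply Finset.sum_congr rfl
      intro k hk
      simp only [Nat.add_sub_cancel]
  · unfold macDown
    rw [hre, hsum]
    apply Finset.sum_congr rfl
    intro k hk
    simp only [Nat.add_sub_cancel]

/-- For an O-sequence `h = (1, h_1, ..., h_e)`, the socle entries
`s_i = h_i - ((h_{i+1})_(i+1))^{-1}_{-1}` are non-negative, i.e.
`((h_{i+1})_(i+1))^{-1}_{-1} ≤ h_i` for `1 ≤ i ≤ e - 1`. -/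
theorem stmt_10 (e : ℕ) (he : 1 ≤ e) (h : ℕ → ℕ)
    (h0 : h 0 = 1) (hpos : ∀ i ≤ e, 1 ≤ h i)
    (hmac : ∀ d, 1 ≤ d → d + 1 ≤ e → ∀ j f, IsMacExp (h d) d j f →
      h (d + 1) ≤ macUp d j f) :
    ∀ i, 1 ≤ i → i + 1 ≤ e → ∀ j f, IsMacExp (h (i + 1)) (i + 1) j f →
      macDown (i + 1) j f ≤ h i := by
  intro i hi1 hie j f hexp
  have hhi : 1 ≤ h i := hpos i (by omega)
  obtain ⟨j', g, hg⟩ := macExp_exists i hi1 (h i) hhi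
  have hgrow : h (i + 1) ≤ macUp i j' g := hmac i hi1 hie j' g hg
  obtain ⟨hup, hdown⟩ := macUp_exp hg
  have := macDown_mono (i + 1) (h (i + 1)) (macUp i j' g) j (j' + 1) f
    (fun k => g (k - 1) + 1) hexp hup hgrow
  omega
end

section
/- The map sending a socle-vector s = (0, s_1, ..., s_e) (a finite tuple of non-negative integers with first entry 0 and last entry s_e > 0) to its minimum h-vector h, defined by h_e = s_e and h_i = ((h_{i+1})_(i+1))^{-1}_{-1} + s_i for i = e-1, ..., 1, with h_0 = 1, is a bijection onto the set of finite O-sequences (1, h_1, ..., h_e) with h_e > 0; its inverse sends h to the sequence s with s_e = h_e and s_i = h_i - ((h_{i+1})_(i+1))^{-1}_{-1}. -/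
lemma choose_lt_choose_top {a k : ℕ} (h1 : 1 ≤ k) (h2 : k ≤ a + 1) :
    a.choose k < (a + 1).choose k := by
  obtain ⟨t, rfl⟩ : ∃ t, k = t + 1 := ⟨k - 1, by omega⟩
  have : (a + 1).choose (t + 1) = a.choose t + a.choose (t + 1) := Nat.choose_succ_succ a t
  have ht : 0 < a.choose t := Nat.choose_pos (by omega)
  omega

lemma sub_le_choose : ∀ i m : ℕ, 1 ≤ i → i ≤ m → m - i + 1 ≤ m.choose i := by
  intro i
  induction i with
  | zero => intro m h; omega
  | succ i ih =>
    intro m h1 h2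
    rcases Nat.eq_zero_or_pos i with rfl | hi
    · simp [Nat.choose_one_right]; omega
    · obtain ⟨m', rfl⟩ : ∃ m', m = m' + 1 := ⟨m - 1, by omega⟩
      have : (m' + 1).choose (i + 1) = m'.choose i + m'.choose (i + 1) :=
        Nat.choose_succ_succ m' i
      have := ih m' hi (by omega)
      omega

lemma exists_window (i n : ℕ) (hi : 1 ≤ i) (hn : 1 ≤ n) :
    ∃ M, i ≤ M ∧ M.choose i ≤ n ∧ n < (M + 1).choose i := by
  classical
  set P : ℕ → Prop := fun m => m.choose i ≤ n with hP
  set M := Nat.findGreatest P (n + i) with hM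
  have hbase : P i := by simp [hP, Nat.choose_self]; omega
  have hMi : i ≤ M := Nat.le_findGreatest (by omega) hbase
  have hspec : P M := Nat.findGreatest_spec (m := i) (by omega) hbase
  refine ⟨M, hMi, hspec, ?_⟩
  by_cases hle : M + 1 ≤ n + i
  · have := Nat.findGreatest_is_greatest (P := P) (n := n + i) (k := M + 1) (by omega) hle
    simpa [hP] using Nat.lt_of_not_le (by simpa [hP] using this)
  · have hMeq : M = n + i := le_antisymm (Nat.findGreatest_le _) (by omega)
    have := sub_le_choose i (M + 1) hi (by omega)
    omega

section MacExpBasic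

variable {n i j : ℕ} {f : ℕ → ℕ}

lemma macExp_f_ge (h : IsMacExp n i j f) : ∀ k, j ≤ k → k ≤ i → k ≤ f k := by
  intro k hjk hki
  induction k, hjk using Nat.le_induction with
  | base => exact h.2.2.1
  | succ k hk ih =>
    have := h.2.2.2.1 k hk (by omega)
    have := ih (by omega)
    omega

lemma macExp_term_le (h : IsMacExp n i j f) {k : ℕ} (h1 : j ≤ k) (h2 : k ≤ i) :
    (f k).choose k ≤ n := by
  rw [h.2.2.2.2]
  exact Finset.single_le_sum (f := fun k => (f k).choose k) (fun a _ => Nat.zero_le _)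
    (Finset.mem_Icc.mpr ⟨h1, h2⟩)

lemma macExp_pos (h : IsMacExp n i j f) : 1 ≤ n := by
  have := macExp_term_le h le_rfl h.2.1
  have := Nat.choose_pos (macExp_f_ge h j le_rfl h.2.1)
  omega

lemma macExp_single {M : ℕ} (hi : 1 ≤ i) (hM : i ≤ M) :
    IsMacExp (M.choose i) i i (fun _ => M) :=
  ⟨hi, le_rfl, hM, fun k hk hk' => absurd (lt_of_le_of_lt hk hk') (lt_irrefl _),
    by simp⟩

lemma macExp_split (h : IsMacExp n (i + 1) j f) (hji : j ≤ i) :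
    IsMacExp (∑ k ∈ Finset.Icc j i, (f k).choose k) i j f ∧
      n = (∑ k ∈ Finset.Icc j i, (f k).choose k) + (f (i + 1)).choose (i + 1) := by
  constructor
  · exact ⟨h.1, hji, h.2.2.1, fun k hk hk' => h.2.2.2.1 k hk (by omega), rfl⟩
  · rw [h.2.2.2.2, Finset.sum_Icc_succ_top (by omega)]

lemma macExp_cons {r M : ℕ} (h : IsMacExp r i j f) (hM : f i < M) :
    IsMacExp (M.choose (i + 1) + r) (i + 1) j (Function.update f (i + 1) M) := by
  have hji := h.2.1
  refine ⟨h.1, by omega, ?_, ?_, ?_⟩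
  · rw [Function.update_of_ne (by omega)]; exact h.2.2.1
  · intro k hk hk'
    rcases Nat.lt_or_ge k i with hki | hki
    · rw [Function.update_of_ne (by omega), Function.update_of_ne (by omega)]
      exact h.2.2.2.1 k hk hki
    · have hkeq : k = i := by omega
      subst hkeq
      rw [Function.update_of_ne (by omega), Function.update_self]
      exact hM
  · rw [Finset.sum_Icc_succ_top (by omega), Function.update_self]
    have : ∑ k ∈ Finset.Icc j i, ((Function.update f (i + 1) M) k).choose k
        = ∑ k ∈ Finset.Icc j i, (f k).choose k := by
      refine Finset.sum_congr rfl fun k hk => ?_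
      rw [Function.update_of_ne (by have := (Finset.mem_Icc.mp hk).2; omega)]
    rw [this, ← h.2.2.2.2]
    omega

lemma macExp_lt_top : ∀ i n j (f : ℕ → ℕ), IsMacExp n i j f → n < (f i + 1).choose i := by
  intro i
  induction i with
  | zero => intro n j f h; exact absurd (h.1.trans h.2.1) (by omega)
  | succ i ih =>
    intro n j f h
    have hfi := macExp_f_ge h (i + 1) h.2.1 le_rfl
    rcases Nat.lt_or_ge i j with hji | hji
    · -- j = i + 1
      have hj : j = i + 1 := by have := h.2.1; omega
      subst hj
      have : n = (f (i + 1)).choose (i + 1) := by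
        rw [h.2.2.2.2, Finset.Icc_self, Finset.sum_singleton]
      rw [this]
      exact choose_lt_choose_top (by omega) (by omega)
    · obtain ⟨hs, hn⟩ := macExp_split h hji
      have hr := ih _ _ _ hs
      have hle : f i + 1 ≤ f (i + 1) := h.2.2.2.1 i (by omega) (by omega)
      have h1 : (f i + 1).choose i ≤ (f (i + 1)).choose i := Nat.choose_le_choose i hle
      have h2 : (f (i + 1) + 1).choose (i + 1)
          = (f (i + 1)).choose i + (f (i + 1)).choose (i + 1) :=
        Nat.choose_succ_succ _ i
      omega

lemma macExp_window (h : IsMacExp n i j f) :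
    i ≤ f i ∧ (f i).choose i ≤ n ∧ n < (f i + 1).choose i :=
  ⟨macExp_f_ge h i h.2.1 le_rfl, macExp_term_le h h.2.1 le_rfl, macExp_lt_top i n j f h⟩

lemma window_unique {a b : ℕ} (hi : 1 ≤ i)
    (hia : i ≤ a) (ha1 : a.choose i ≤ n) (ha2 : n < (a + 1).choose i)
    (hib : i ≤ b) (hb1 : b.choose i ≤ n) (hb2 : n < (b + 1).choose i) : a = b := by
  by_contra hab
  rcases Nat.lt_or_ge a b with hlt | hge
  · have : (a + 1).choose i ≤ b.choose i := Nat.choose_le_choose i (by omega)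
    omega
  · have : (b + 1).choose i ≤ a.choose i := Nat.choose_le_choose i (by omega)
    omega

end MacExpBasic

lemma macExp_unique : ∀ i n j (f : ℕ → ℕ) j' (f' : ℕ → ℕ),
    IsMacExp n i j f → IsMacExp n i j' f' →
    j = j' ∧ ∀ k, j ≤ k → k ≤ i → f k = f' k := by
  intro i
  induction i with
  | zero => intro n j f j' f' h _; exact absurd (h.1.trans h.2.1) (by omega)
  | succ i ih =>
    intro n j f j' f' h h'
    have hw := macExp_window h
    have hw' := macExp_window h'
    have htop : f (i + 1) = f' (i + 1) :=
      window_unique (by omega) hw.1 hw.2.1 hw.2.2 hw'.1 hw'.2.1 hw'.2.2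
    rcases Nat.lt_or_ge i j with hj | hj
    · have hj : j = i + 1 := by have := h.2.1; omega
      rcases Nat.lt_or_ge i j' with hj' | hj'
      · have hj' : j' = i + 1 := by have := h'.2.1; omega
        subst hj; subst hj'
        refine ⟨rfl, fun k hk1 hk2 => ?_⟩
        have : k = i + 1 := by omega
        rw [this]; exact htop
      · exfalso
        obtain ⟨hs', hn'⟩ := macExp_split h' hj'
        have hr' : 1 ≤ ∑ k ∈ Finset.Icc j' i, (f' k).choose k := macExp_pos hs'
        have hn : n = (f (i + 1)).choose (i + 1) := by
          subst hj; rw [h.2.2.2.2, Finset.Icc_self, Finset.sum_singleton]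
        rw [htop] at hn
        omega
    · rcases Nat.lt_or_ge i j' with hj' | hj'
      · exfalso
        obtain ⟨hs, hn⟩ := macExp_split h hj
        have hr : 1 ≤ ∑ k ∈ Finset.Icc j i, (f k).choose k := macExp_pos hs
        have hn' : n = (f' (i + 1)).choose (i + 1) := by
          have hj'e : j' = i + 1 := by have := h'.2.1; omega
          subst hj'e; rw [h'.2.2.2.2, Finset.Icc_self, Finset.sum_singleton]
        rw [← htop] at hn'
        omega
      · obtain ⟨hs, hn⟩ := macExp_split h hj
        obtain ⟨hs', hn'⟩ := macExp_split h' hj'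
        have hreq : ∑ k ∈ Finset.Icc j i, (f k).choose k
            = ∑ k ∈ Finset.Icc j' i, (f' k).choose k := by rw [← htop] at hn'; omega
        rw [← hreq] at hs'
        obtain ⟨hjj, hff⟩ := ih _ j f j' f' hs hs'
        refine ⟨hjj, fun k hk1 hk2 => ?_⟩
        rcases Nat.lt_or_ge k (i + 1) with hki | hki
        · exact hff k hk1 (by omega)
        · have : k = i + 1 := by omega
          rw [this]; exact htop

lemma macUp_unique {n i j j' : ℕ} {f f' : ℕ → ℕ}
    (h : IsMacExp n i j f) (h' : IsMacExp n i j' f') : macUp i j f = macUp i j' f' := by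
  obtain ⟨rfl, hff⟩ := macExp_unique i n j f j' f' h h'
  exact Finset.sum_congr rfl fun k hk => by
    have := Finset.mem_Icc.mp hk; rw [hff k this.1 this.2]

lemma macDown_unique {n i j j' : ℕ} {f f' : ℕ → ℕ}
    (h : IsMacExp n i j f) (h' : IsMacExp n i j' f') : macDown i j f = macDown i j' f' := by
  obtain ⟨rfl, hff⟩ := macExp_unique i n j f j' f' h h'
  exact Finset.sum_congr rfl fun k hk => by
    have := Finset.mem_Icc.mp hk; rw [hff k this.1 this.2]

open Classical in
noncomputable def mup (i n : ℕ) : ℕ :=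
  if h : ∃ j f, IsMacExp n i j f then macUp i h.choose h.choose_spec.choose else 0

open Classical in
noncomputable def mdown (i n : ℕ) : ℕ :=
  if h : ∃ j f, IsMacExp n i j f then macDown i h.choose h.choose_spec.choose else 0

lemma mup_eq {n i j : ℕ} {f : ℕ → ℕ} (h : IsMacExp n i j f) : mup i n = macUp i j f := by
  rw [mup]
  rw [dif_pos ⟨j, f, h⟩]
  exact macUp_unique (Exists.choose_spec (Exists.choose_spec (⟨j, f, h⟩ : ∃ j f, IsMacExp n i j f))) h

lemma mdown_eq {n i j : ℕ} {f : ℕ → ℕ} (h : IsMacExp n i j f) : mdown i n = macDown i j f := by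
  rw [mdown]
  rw [dif_pos ⟨j, f, h⟩]
  exact macDown_unique (Exists.choose_spec (Exists.choose_spec (⟨j, f, h⟩ : ∃ j f, IsMacExp n i j f))) h

lemma mup_zero (i : ℕ) : mup i 0 = 0 := by
  rw [mup]
  rw [dif_neg]; rintro ⟨j, f, h⟩; exact absurd (macExp_pos h) (by omega)

lemma mdown_zero (i : ℕ) : mdown i 0 = 0 := by
  rw [mdown]
  rw [dif_neg]; rintro ⟨j, f, h⟩; exact absurd (macExp_pos h) (by omega)

lemma mdown_pos {i n : ℕ} (hi : 1 ≤ i) (hn : 1 ≤ n) : 1 ≤ mdown i n := by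
  obtain ⟨j, f, h⟩ := macExp_exists i hi n hn
  rw [mdown_eq h, macDown]
  have hfi := macExp_f_ge h i h.2.1 le_rfl
  have hterm : 1 ≤ (f i - 1).choose (i - 1) := Nat.choose_pos (by omega)
  calc 1 ≤ (f i - 1).choose (i - 1) := hterm
    _ ≤ _ := Finset.single_le_sum (f := fun k => (f k - 1).choose (k - 1))
        (fun a _ => Nat.zero_le _) (Finset.mem_Icc.mpr ⟨h.2.1, le_rfl⟩)

lemma macExp_one {n : ℕ} (hn : 1 ≤ n) : IsMacExp n 1 1 (fun _ => n) := by
  refine ⟨le_rfl, le_rfl, hn, fun k hk hk' => by omega, ?_⟩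
  simp [Nat.choose_one_right]

lemma mup_one {n : ℕ} (hn : 1 ≤ n) : mup 1 n = (n + 1).choose 2 := by
  rw [mup_eq (macExp_one hn), macUp]
  simp

lemma mdown_one {n : ℕ} (hn : 1 ≤ n) : mdown 1 n = 1 := by
  rw [mdown_eq (macExp_one hn), macDown]
  simp

lemma mac_decomp {i M n : ℕ} (hi : 1 ≤ i) (hM : i + 1 ≤ M)
    (h1 : M.choose (i + 1) ≤ n) (h2 : n < (M + 1).choose (i + 1)) :
    mup (i + 1) n = (M + 1).choose (i + 2) + mup i (n - M.choose (i + 1)) ∧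
    mdown (i + 1) n = (M - 1).choose i + mdown i (n - M.choose (i + 1)) := by
  set r := n - M.choose (i + 1) with hrdef
  by_cases hr : r = 0
  · have hneq : n = M.choose (i + 1) := by omega
    have hexp : IsMacExp n (i + 1) (i + 1) (fun _ => M) := hneq ▸ macExp_single (by omega) hM
    rw [hr, mup_zero, mdown_zero, mup_eq hexp, mdown_eq hexp, macUp, macDown]
    simp
  · have hr1 : 1 ≤ r := by omega
    obtain ⟨j, f, hf⟩ := macExp_exists i hi r hr1
    have hw := macExp_window hf
    have hlt : r < M.choose i := by
      have : (M + 1).choose (i + 1) = M.choose i + M.choose (i + 1) := Nat.choose_succ_succ M i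
      omega
    have hfiM : f i < M := by
      by_contra hge
      have : M.choose i ≤ (f i).choose i := Nat.choose_le_choose i (by omega)
      omega
    have hcons := macExp_cons hf hfiM
    have hval : M.choose (i + 1) + r = n := by omega
    rw [hval] at hcons
    have hji := hf.2.1
    constructor
    · rw [mup_eq hcons, mup_eq hf, macUp, macUp, Finset.sum_Icc_succ_top (by omega),
        Function.update_self]
      have : ∑ k ∈ Finset.Icc j i, ((Function.update f (i + 1) M) k + 1).choose (k + 1)
          = ∑ k ∈ Finset.Icc j i, (f k + 1).choose (k + 1) := by
        refine Finset.sum_congr rfl fun k hk => ?_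
        rw [Function.update_of_ne (by have := (Finset.mem_Icc.mp hk).2; omega)]
      rw [this]
      have hA : (M + 1).choose (i + 1 + 1) = (M + 1).choose (i + 2) := rfl
      omega
    · rw [mdown_eq hcons, mdown_eq hf, macDown, macDown, Finset.sum_Icc_succ_top (by omega),
        Function.update_self]
      have : ∑ k ∈ Finset.Icc j i, ((Function.update f (i + 1) M) k - 1).choose (k - 1)
          = ∑ k ∈ Finset.Icc j i, (f k - 1).choose (k - 1) := by
        refine Finset.sum_congr rfl fun k hk => ?_
        rw [Function.update_of_ne (by have := (Finset.mem_Icc.mp hk).2; omega)]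
      rw [this]
      have : i + 1 - 1 = i := by omega
      rw [this]; omega

lemma mup_ge_top {n i j : ℕ} {f : ℕ → ℕ} (h : IsMacExp n i j f) :
    (f i + 1).choose (i + 1) ≤ mup i n := by
  rw [mup_eq h, macUp]
  exact Finset.single_le_sum (f := fun k => (f k + 1).choose (k + 1))
    (fun a _ => Nat.zero_le _) (Finset.mem_Icc.mpr ⟨h.2.1, le_rfl⟩)

lemma macExp_shift {n i j : ℕ} {f : ℕ → ℕ} (h : IsMacExp n i j f) :
    IsMacExp (macUp i j f) (i + 1) (j + 1) (fun k => f (k - 1) + 1) := by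
  refine ⟨by omega, by have := h.2.1; omega, ?_, ?_, ?_⟩
  · simp only [Nat.add_sub_cancel]
    have := h.2.2.1; omega
  · intro k hk hk'
    simp only
    have : k - 1 + 1 = k := by omega
    have hstep := h.2.2.2.1 (k - 1) (by omega) (by omega)
    rw [this] at hstep
    simp only [Nat.add_sub_cancel]
    omega
  · rw [macUp]
    have hrw : Finset.Icc (j + 1) (i + 1) = (Finset.Icc j i).map
        (addRightEmbedding 1) := by
      rw [Finset.map_add_right_Icc]
    rw [hrw, Finset.sum_map]
    refine Finset.sum_congr rfl fun k hk => ?_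
    simp [addRightEmbedding]

lemma mup_lt_top {n i j : ℕ} {f : ℕ → ℕ} (h : IsMacExp n i j f) :
    mup i n < (f i + 2).choose (i + 1) := by
  rw [mup_eq h]
  have := macExp_lt_top (i + 1) _ _ _ (macExp_shift h)
  simpa using this

lemma mup_mono : ∀ i, 1 ≤ i → ∀ m n : ℕ, 1 ≤ m → m ≤ n → mup i m ≤ mup i n := by
  intro i
  induction i with
  | zero => omega
  | succ i ih =>
    intro _ m n hm hmn
    have hn : 1 ≤ n := by omega
    rcases Nat.eq_zero_or_pos i with rfl | hi
    · rw [mup_one hm, mup_one hn]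
      exact Nat.choose_le_choose 2 (by omega)
    · obtain ⟨j, f, hf⟩ := macExp_exists (i + 1) (by omega) m hm
      obtain ⟨j', f', hf'⟩ := macExp_exists (i + 1) (by omega) n hn
      have hw := macExp_window hf
      have hw' := macExp_window hf'
      set M' := f (i + 1) with hM'd
      set M := f' (i + 1) with hMd
      have hMM : M' ≤ M := by
        by_contra hc
        have : (M + 1).choose (i + 1) ≤ M'.choose (i + 1) :=
          Nat.choose_le_choose (i + 1) (by omega)
        omega
      rcases eq_or_lt_of_le hMM with heq | hlt
      · -- same top coefficient
        obtain ⟨hdm, -⟩ := mac_decomp hi hw.1 hw.2.1 hw.2.2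
        obtain ⟨hdn, -⟩ := mac_decomp hi hw'.1 hw'.2.1 hw'.2.2
        rw [hdm, hdn, ← heq]
        have hsub : m - M'.choose (i + 1) ≤ n - M'.choose (i + 1) := by omega
        by_cases hz : m - M'.choose (i + 1) = 0
        · rw [hz, mup_zero]; omega
        · have := ih hi _ _ (by omega) hsub
          omega
      · -- strictly smaller top coefficient
        have h1 : mup (i + 1) m < (M' + 2).choose (i + 2) := mup_lt_top hf
        have h2 : (M' + 2).choose (i + 2) ≤ (M + 1).choose (i + 2) :=
          Nat.choose_le_choose (i + 2) (by omega)
        have h3 : (M + 1).choose (i + 2) ≤ mup (i + 1) n := mup_ge_top hf'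
        omega

lemma le_mup_mdown : ∀ i, 1 ≤ i → ∀ n : ℕ, 1 ≤ n → n ≤ mup i (mdown (i + 1) n) := by
  intro i
  induction i with
  | zero => omega
  | succ i ih =>
    intro _ n hn
    show n ≤ mup (i + 1) (mdown (i + 2) n)
    obtain ⟨M, hM, h1, h2⟩ := exists_window (i + 2) n (by omega) hn
    have hMc : (M + 1).choose (i + 2) = M.choose (i + 1) + M.choose (i + 2) :=
      Nat.choose_succ_succ M (i + 1)
    obtain ⟨-, hdn⟩ := mac_decomp (i := i + 1) (by omega) hM h1 h2
    simp only [show i + 1 + 1 = i + 2 from rfl] at hdn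
    set r := n - M.choose (i + 2) with hrdef
    by_cases hr : r = 0
    · have hm : mdown (i + 2) n = (M - 1).choose (i + 1) := by
        rw [hdn, hr, mdown_zero]
        omega
      have hexp : IsMacExp ((M - 1).choose (i + 1)) (i + 1) (i + 1) (fun _ => M - 1) :=
        macExp_single (by omega) (by omega)
      rw [hm, mup_eq hexp, macUp]
      simp only [Finset.Icc_self, Finset.sum_singleton]
      rw [show M - 1 + 1 = M from by omega]
      have hA : M.choose (i + 1 + 1) = M.choose (i + 2) := rfl
      omega
    · have hr1 : 1 ≤ r := by omega
      have hrlt : r < M.choose (i + 1) := by omega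
      have hm1 : 1 ≤ mdown (i + 2) n := by
        have : 1 ≤ (M - 1).choose (i + 1) := Nat.choose_pos (by omega)
        omega
      by_cases hcase : mdown (i + 2) n < M.choose (i + 1)
      · -- top coefficient of mdown (i+2) n is M - 1; need i ≥ 1
        have hi : 1 ≤ i := by
          by_contra hc
          have hi0 : i = 0 := by omega
          subst hi0
          have hd1 : mdown 1 r = 1 := mdown_one hr1
          rw [hd1, Nat.choose_one_right] at hdn
          rw [Nat.choose_one_right] at hcase
          omega
        have hwm1 : (M - 1).choose (i + 1) ≤ mdown (i + 2) n := by omega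
        have hwm2 : mdown (i + 2) n < (M - 1 + 1).choose (i + 1) := by
          rw [show M - 1 + 1 = M from by omega]; exact hcase
        obtain ⟨hdm, -⟩ := mac_decomp (i := i) hi (by omega) hwm1 hwm2
        have hsub : mdown (i + 2) n - (M - 1).choose (i + 1) = mdown (i + 1) r := by omega
        rw [hdm, hsub, show M - 1 + 1 = M from by omega]
        have hih := ih hi r hr1
        have hA : M.choose (i + 1 + 1) = M.choose (i + 2) := rfl
        omega
      · -- mdown (i+2) n ≥ C(M, i+1): its top coefficient is ≥ M
        obtain ⟨j, f, hfm⟩ := macExp_exists (i + 1) (by omega) _ hm1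
        have hwm := macExp_window hfm
        have hTM : M ≤ f (i + 1) := by
          by_contra hc
          have : (f (i + 1) + 1).choose (i + 1) ≤ M.choose (i + 1) :=
            Nat.choose_le_choose (i + 1) (by omega)
          omega
        have h3 : (M + 1).choose (i + 2) ≤ (f (i + 1) + 1).choose (i + 2) :=
          Nat.choose_le_choose (i + 2) (by omega)
        have h4 : (f (i + 1) + 1).choose (i + 1 + 1) ≤ mup (i + 1) (mdown (i + 2) n) :=
          mup_ge_top hfm
        have hA : (f (i + 1) + 1).choose (i + 1 + 1) = (f (i + 1) + 1).choose (i + 2) := rfl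
        omega


noncomputable def Hseq (s : ℕ → ℕ) (e : ℕ) : ℕ → ℕ
  | 0 => s e
  | k + 1 => mdown (e - k) (Hseq s e k) + s (e - k - 1)

noncomputable def hvec (s : ℕ → ℕ) (e i : ℕ) : ℕ :=
  if i = 0 then 1 else if e < i then 0 else Hseq s e (e - i)

lemma hvec_zero (s : ℕ → ℕ) (e : ℕ) : hvec s e 0 = 1 := by simp [hvec]

lemma hvec_top (s : ℕ → ℕ) {e i : ℕ} (h : e < i) : hvec s e i = 0 := by
  rw [hvec, if_neg (by omega), if_pos h]

lemma hvec_e (s : ℕ → ℕ) {e : ℕ} (he : 1 ≤ e) : hvec s e e = s e := by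
  rw [hvec, if_neg (by omega), if_neg (by omega), Nat.sub_self]
  rfl

lemma hvec_rec (s : ℕ → ℕ) {e i : ℕ} (h1 : 1 ≤ i) (h2 : i < e) :
    hvec s e i = mdown (i + 1) (hvec s e (i + 1)) + s i := by
  have hk : e - i = (e - i - 1) + 1 := by omega
  rw [hvec, if_neg (by omega), if_neg (by omega), hk]
  show mdown (e - (e - i - 1)) (Hseq s e (e - i - 1)) + s (e - (e - i - 1) - 1) = _
  rw [show e - (e - i - 1) = i + 1 from by omega]
  simp only [Nat.add_sub_cancel]
  rw [hvec, if_neg (by omega), if_neg (by omega),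
    show e - (i + 1) = e - i - 1 from by omega]

lemma hvec_pos (s : ℕ → ℕ) {e : ℕ} (hse : 1 ≤ s e) (he : 1 ≤ e) :
    ∀ i, 1 ≤ i → i ≤ e → 1 ≤ hvec s e i := by
  have main : ∀ k i, 1 ≤ i → i ≤ e → e - i = k → 1 ≤ hvec s e i := by
    intro k
    induction k with
    | zero =>
      intro i h1 h2 h3
      have : i = e := by omega
      subst this
      rw [hvec_e s he]; exact hse
    | succ k ihk =>
      intro i h1 h2 h3
      have hnext : 1 ≤ hvec s e (i + 1) := ihk (i + 1) (by omega) (by omega) (by omega)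
      rw [hvec_rec s h1 (by omega)]
      have := mdown_pos (i := i + 1) (by omega) hnext
      omega
  intro i h1 h2
  exact main (e - i) i h1 h2 rfl

/-- The map sending a socle-vector `s = (0, s_1, ..., s_e)` (with `s_e > 0`) to its minimum
`h`-vector, defined by `h_e = s_e`, `h_i = ((h_{i+1})_(i+1))^{-1}_{-1} + s_i`, `h_0 = 1`,
is a bijection onto the set of finite O-sequences `(1, h_1, ..., h_e)` with `h_e > 0`;
the inverse sends `h` to `s` with `s_e = h_e`, `s_i = h_i - ((h_{i+1})_(i+1))^{-1}_{-1}`. -/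
theorem stmt_11 (e : ℕ) (he : 1 ≤ e) :
    (∀ s : ℕ → ℕ, s 0 = 0 → 1 ≤ s e → (∀ i, e < i → s i = 0) →
      ∃! h : ℕ → ℕ,
        (h 0 = 1 ∧ (∀ i ≤ e, 1 ≤ h i) ∧ (∀ i, e < i → h i = 0) ∧
          (∀ d, 1 ≤ d → d + 1 ≤ e → ∀ j f, IsMacExp (h d) d j f →
            h (d + 1) ≤ macUp d j f)) ∧
        h e = s e ∧
        ∀ i, 1 ≤ i → i + 1 ≤ e → ∀ j f, IsMacExp (h (i + 1)) (i + 1) j f →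
          h i = macDown (i + 1) j f + s i) ∧
    (∀ h : ℕ → ℕ,
      (h 0 = 1 ∧ (∀ i ≤ e, 1 ≤ h i) ∧ (∀ i, e < i → h i = 0) ∧
        (∀ d, 1 ≤ d → d + 1 ≤ e → ∀ j f, IsMacExp (h d) d j f →
          h (d + 1) ≤ macUp d j f)) →
      ∃! s : ℕ → ℕ,
        (s 0 = 0 ∧ 1 ≤ s e ∧ (∀ i, e < i → s i = 0)) ∧
        s e = h e ∧
        ∀ i, 1 ≤ i → i + 1 ≤ e → ∀ j f, IsMacExp (h (i + 1)) (i + 1) j f →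
          s i = h i - macDown (i + 1) j f) := by
  constructor
  · -- forward direction: socle vector to minimal h-vector
    intro s hs0 hse hsz
    refine ⟨hvec s e, ⟨⟨hvec_zero s e, ?_, fun i hi => hvec_top s hi, ?_⟩, hvec_e s he, ?_⟩, ?_⟩
    · intro i hie
      rcases Nat.eq_zero_or_pos i with rfl | hi
      · rw [hvec_zero]
      · exact hvec_pos s hse he i hi hie
    · -- Macaulay growth
      intro d hd hde j f hexp
      have hrec := hvec_rec s hd (by omega : d < e)
      have hpos1 : 1 ≤ hvec s e (d + 1) := hvec_pos s hse he (d + 1) (by omega) hde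
      have hkey := le_mup_mdown d hd (hvec s e (d + 1)) hpos1
      have hmono := mup_mono d hd (mdown (d + 1) (hvec s e (d + 1))) (hvec s e d)
        (mdown_pos (by omega) hpos1) (by rw [hrec]; exact Nat.le_add_right _ _)
      rw [← mup_eq hexp]
      exact le_trans hkey hmono
    · -- the recursion identity
      intro i hi hie j f hexp
      rw [← mdown_eq hexp]
      exact hvec_rec s hi (by omega)
    · -- uniqueness
      rintro h' ⟨⟨h0, hposs, hz, -⟩, heq, hrec'⟩
      funext i
      by_cases hi0 : i = 0
      · subst hi0; rw [h0, hvec_zero]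
      by_cases hie : e < i
      · rw [hz i hie, hvec_top s hie]
      have main : ∀ k i, 1 ≤ i → i ≤ e → e - i = k → h' i = hvec s e i := by
        intro k
        induction k with
        | zero =>
          intro i h1 h2 h3
          have : i = e := by omega
          subst this
          rw [heq, hvec_e s he]
        | succ k ihk =>
          intro i h1 h2 h3
          have hnext : h' (i + 1) = hvec s e (i + 1) :=
            ihk (i + 1) (by omega) (by omega) (by omega)
          have hp : 1 ≤ h' (i + 1) := hposs (i + 1) (by omega)
          obtain ⟨j, f, hexp⟩ := macExp_exists (i + 1) (by omega) _ hp
          rw [hrec' i h1 (by omega) j f hexp, ← mdown_eq hexp, hnext,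
            hvec_rec s h1 (by omega)]
      exact main (e - i) i (by omega) (by omega) rfl
  · -- backward direction: h-vector to socle vector
    rintro h ⟨h0, hpos, hz, -⟩
    refine ⟨fun i => if i = 0 then 0 else if e < i then 0 else
        if i = e then h e else h i - mdown (i + 1) (h (i + 1)), ⟨⟨?_, ?_, ?_⟩, ?_, ?_⟩, ?_⟩
    · simp
    · simp only [if_neg (show ¬(e = 0) from by omega), if_neg (lt_irrefl e), if_pos rfl]
      exact hpos e le_rfl
    · intro i hi
      simp only [if_neg (show ¬(i = 0) from by omega), if_pos hi]
    · simp only [if_neg (show ¬(e = 0) from by omega), if_neg (lt_irrefl e)]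
      simp
    · intro i hi hie j f hexp
      simp only [if_neg (show ¬(i = 0) from by omega), if_neg (show ¬(e < i) from by omega),
        if_neg (show ¬(i = e) from by omega)]
      rw [mdown_eq hexp]
    · rintro s' ⟨⟨hs0', -, hz'⟩, he', hrec'⟩
      funext i
      by_cases hi0 : i = 0
      · subst hi0; simp [hs0']
      by_cases hie : e < i
      · rw [hz' i hie]
        simp only [if_neg hi0, if_pos hie]
      by_cases hieq : i = e
      · subst hieq
        rw [he']
        simp only [if_neg hi0, if_neg hie]
        simp
      · have h1 : 1 ≤ i := by omega
        have h2 : i + 1 ≤ e := by omega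
        have hp : 1 ≤ h (i + 1) := hpos (i + 1) h2
        obtain ⟨j, f, hexp⟩ := macExp_exists (i + 1) (by omega) _ hp
        rw [hrec' i h1 h2 j f hexp, ← mdown_eq hexp]
        simp only [if_neg hi0, if_neg hie, if_neg hieq]
end
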